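/- arXiv:2012.07307 — 7 statements merged into one kernel-verified Lean document; each statement's English description precedes it below -/
import Mathlib

section
/- As t → ∞ through the positive integers, q_t converges to g / Σ_{k=0}^{∞} e^{−θ k^β}; that is, the time-average maintenance cost of the policy with planning time t converges, as t → ∞, to g divided by the mean E(L) = Σ_{k=0}^{∞} P(L > k) of the discrete Weibull life length L. -/
open Real Filter

/-- As `t → ∞` through the positive integers, the time-average maintenance
cost `q_t` converges to `g / Σ_{k=0}^{∞} e^{−θ k^β}`, i.e. to `g` divided by the mean
`E(L) = Σ_{k=0}^{∞} P(L > k)` of the discrete Weibull life length. -/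
theorem qt_tendsto_pure_cm_cost
    (θ β g h m : ℝ) (hθ : 0 < θ) (hβ : 1 < β) (hg : 0 ≤ g) (hh : 0 ≤ h) (hm : 0 ≤ m)
    (q : ℕ → ℝ)
    (hq : ∀ t : ℕ, 1 ≤ t →
      q t = ((1 - Real.exp (-θ * (t : ℝ) ^ β)) * g
            + Real.exp (-θ * (t : ℝ) ^ β) * (h + m * t))
          / ((∑ k ∈ Finset.Icc 1 t,
              (Real.exp (-θ * ((k : ℝ) - 1) ^ β) - Real.exp (-θ * (k : ℝ) ^ β)) * (k : ℝ))
            + Real.exp (-θ * (t : ℝ) ^ β) * (t : ℝ))) :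
    Tendsto q atTop (nhds (g / ∑' k : ℕ, Real.exp (-θ * (k : ℝ) ^ β))) := by
  set a : ℕ → ℝ := fun k => Real.exp (-θ * (k : ℝ) ^ β) with ha
  -- k ≤ k^β for all naturals
  have hle : ∀ k : ℕ, (k : ℝ) ≤ (k : ℝ) ^ β := by
    intro k
    rcases Nat.eq_zero_or_pos k with hk | hk
    · simp [hk, Real.zero_rpow (by positivity : β ≠ 0)]
    · have h1 : (1 : ℝ) ≤ (k : ℝ) := by exact_mod_cast hk
      calc (k : ℝ) = (k : ℝ) ^ (1 : ℝ) := by rw [Real.rpow_one]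
        _ ≤ (k : ℝ) ^ β := Real.rpow_le_rpow_of_exponent_le h1 hβ.le
  have hbound : ∀ k : ℕ, a k ≤ Real.exp (-θ) ^ k := by
    intro k
    rw [← Real.exp_nat_mul]
    apply Real.exp_le_exp.mpr
    have := hle k
    nlinarith [hle k]
  have hsum : Summable a := by
    apply Summable.of_nonneg_of_le (fun k => (Real.exp_pos _).le) hbound
    exact summable_geometric_of_lt_one (Real.exp_pos _).le
      (Real.exp_lt_one_iff.mpr (by linarith))
  set S := ∑' k : ℕ, a k with hS
  have hSpos : 0 < S := by
    have h0 : a 0 = 1 := by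
      simp [ha, Real.zero_rpow (by positivity : β ≠ 0)]
    calc (0:ℝ) < 1 := one_pos
      _ = a 0 := h0.symm
      _ ≤ S := Summable.le_tsum hsum 0 (fun k _ => (Real.exp_pos _).le)
  -- denominator identity
  have hden : ∀ t : ℕ, 1 ≤ t →
      (∑ k ∈ Finset.Icc 1 t,
        (Real.exp (-θ * ((k : ℝ) - 1) ^ β) - Real.exp (-θ * (k : ℝ) ^ β)) * (k : ℝ))
        + a t * (t : ℝ) = ∑ k ∈ Finset.range t, a k := by
    intro t ht
    induction t with
    | zero => omega
    | succ n ih =>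
      rcases Nat.eq_zero_or_pos n with hn | hn
      · subst hn
        norm_num [ha, Real.zero_rpow (by positivity : β ≠ 0)]
      · rw [Finset.sum_Icc_succ_top (by omega : 1 ≤ n + 1), Finset.sum_range_succ, ← ih hn]
        have hc : ((n+1 : ℕ) : ℝ) = (n : ℝ) + 1 := by push_cast; ring
        simp only [ha, hc, add_sub_cancel_right]
        ring
  -- a t → 0
  have hA0 : Tendsto a atTop (nhds 0) := hsum.tendsto_atTop_zero
  -- t * a t → 0
  have hTA : Tendsto (fun t : ℕ => (t : ℝ) * a t) atTop (nhds 0) := by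
    have hbase : Tendsto (fun x : ℝ => x ^ 1 * Real.exp (-x)) atTop (nhds 0) :=
      Real.tendsto_pow_mul_exp_neg_atTop_nhds_zero 1
    have hcomp : Tendsto (fun t : ℕ => (θ * t) ^ 1 * Real.exp (-(θ * t))) atTop (nhds 0) :=
      hbase.comp ((tendsto_natCast_atTop_atTop).const_mul_atTop hθ)
    have hmul : Tendsto (fun t : ℕ => (1/θ) * ((θ * t) ^ 1 * Real.exp (-(θ * t))))
        atTop (nhds ((1/θ) * 0)) := hcomp.const_mul _
    rw [mul_zero] at hmul
    apply squeeze_zero (fun t => by positivity) _ hmul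
    intro t
    have h1 : a t ≤ Real.exp (-(θ * t)) := by
      apply Real.exp_le_exp.mpr
      have := hle t
      nlinarith
    have h2 : (t : ℝ) * a t ≤ (t : ℝ) * Real.exp (-(θ * t)) :=
      mul_le_mul_of_nonneg_left h1 (Nat.cast_nonneg t)
    calc (t : ℝ) * a t ≤ (t : ℝ) * Real.exp (-(θ * t)) := h2
      _ = (1/θ) * ((θ * t) ^ 1 * Real.exp (-(θ * t))) := by
          field_simp
  -- denominator tends to S
  have hDen : Tendsto (fun t : ℕ => ∑ k ∈ Finset.range t, a k) atTop (nhds S) :=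
    hsum.hasSum.tendsto_sum_nat
  -- numerator tends to g
  have hNum : Tendsto (fun t : ℕ => (1 - a t) * g + a t * (h + m * t)) atTop (nhds g) := by
    have : Tendsto (fun t : ℕ => (1 - a t) * g + (a t * h + m * ((t:ℝ) * a t)))
        atTop (nhds ((1 - 0) * g + (0 * h + m * 0))) := by
      exact (((tendsto_const_nhds.sub hA0).mul tendsto_const_nhds).add
        ((hA0.mul tendsto_const_nhds).add (hTA.const_mul m)))
    simp only [sub_zero, one_mul, zero_mul, mul_zero, add_zero] at this
    apply this.congr
    intro t; ring
  have hfinal : Tendsto (fun t : ℕ => ((1 - a t) * g + a t * (h + m * t))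
      / (∑ k ∈ Finset.range t, a k)) atTop (nhds (g / S)) :=
    hNum.div hDen hSpos.ne'
  apply hfinal.congr'
  filter_upwards [eventually_ge_atTop 1] with t ht
  rw [hq t ht, ← hden t ht]
end

section
/- Let a ≥ 0 and δ ≥ 1 be integers with s + δ < T. Then for every integer t with s + δ + 1 ≤ t ≤ T + 1, the difference P(L > a)·f_{(s,a)}(t) − P(L > a + δ)·f_{(s+δ,a+δ)}(t) equals Σ_{u=1}^{δ} (g + (T − s − u) c)·P(L = a + u); in particular this difference does not depend on t. Here L has the discrete Weibull distribution W(θ,β). -/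
/-!
For the discrete Weibull law, `exp(-θ b^β) exp(θ (b^β - (b+u)^β)) = exp(-θ (b+u)^β)`, that is
`P(L > b) P(L_b > u) = P(L > b + u)`; taking differences in `u`,
`P(L > b) P(L_b = k) = P(L = b + k)`. Hence `P(L > b) E[ψ(b + L_b)]` is
`Σ_{b < j ≤ N} ψ(j) P(L = j) + C P(L > N)` for a cost `ψ` of the age that is constant `C`
beyond `N`. Both objectives are of this form with the same cost, since the age at time `t` is
`t - s + a` in both problems, and the same `N = a + t - s`; their difference is therefore the
sum over the ages `a < j ≤ a + δ`.
-/

open MeasureTheory ProbabilityTheory Real Finset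

section ResidualLife

variable {Ω : Type*} [MeasurableSpace Ω] (μ : Measure Ω)

def IsResidualLife (L X : Ω → ℕ) (b : ℕ) : Prop :=
  ∀ u : ℕ, (μ {ω | b < L ω}).toReal * (μ {ω | u < X ω}).toReal = (μ {ω | b + u < L ω}).toReal

variable {μ}

theorem isResidualLife_of_weibull {θ β : ℝ} {L X : Ω → ℕ} {b : ℕ}
    (hL : ∀ u : ℕ, μ {ω | u < L ω} = ENNReal.ofReal (exp (-θ * (u : ℝ) ^ β)))
    (hX : ∀ u : ℕ, μ {ω | u < X ω}
      = ENNReal.ofReal (exp (θ * ((b : ℝ) ^ β - ((b : ℝ) + u) ^ β)))) :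
    IsResidualLife μ L X b := by
  intro u
  simp only [hL, hX, ENNReal.toReal_ofReal (exp_nonneg _), ← exp_add]
  push_cast
  ring_nf

theorem toReal_measure_eq_succ_eq_sub [IsFiniteMeasure μ] {X : Ω → ℕ} (hX : Measurable X) (n : ℕ) :
    (μ {ω | X ω = n + 1}).toReal
      = (μ {ω | n < X ω}).toReal - (μ {ω | n + 1 < X ω}).toReal := by
  have hdiff : {ω | X ω = n + 1} = {ω | n < X ω} \ {ω | n + 1 < X ω} := by
    ext ω; simp only [Set.mem_ofPred_eq, Set.mem_sdiff]; omega
  rw [hdiff]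
  exact measureReal_sdiff (fun ω (hω : n + 1 < X ω) => by simp only [Set.mem_ofPred_eq]; omega)
    (hX measurableSet_Ioi)

theorem IsResidualLife.mul_toReal_measure_eq [IsFiniteMeasure μ] {L X : Ω → ℕ} {b k : ℕ}
    (hres : IsResidualLife μ L X b) (hL : Measurable L) (hX : Measurable X) (hk : 1 ≤ k) :
    (μ {ω | b < L ω}).toReal * (μ {ω | X ω = k}).toReal = (μ {ω | L ω = b + k}).toReal := by
  obtain ⟨n, rfl⟩ := Nat.exists_eq_add_of_le' hk
  rw [toReal_measure_eq_succ_eq_sub hX, mul_sub, hres, hres, ← add_assoc,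
    toReal_measure_eq_succ_eq_sub hL, add_assoc]

theorem integral_comp_eq_sum_add_tail [IsFiniteMeasure μ] {X : Ω → ℕ} (hX : Measurable X)
    (hpos : ∀ ω, 1 ≤ X ω) {φ : ℕ → ℝ} {M : ℕ} {C : ℝ} (hφ : ∀ k, M < k → φ k = C) :
    ∫ ω, φ (X ω) ∂μ
      = ∑ k ∈ Ioc 0 M, φ k * (μ {ω | X ω = k}).toReal + C * (μ {ω | M < X ω}).toReal := by
  have hmeas : ∀ k : ℕ, MeasurableSet {ω | X ω = k} := fun k => hX (measurableSet_singleton k)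
  have htail : MeasurableSet {ω | M < X ω} := hX measurableSet_Ioi
  have hdecomp : (fun ω => φ (X ω)) = fun ω =>
      ∑ k ∈ Ioc 0 M, {ω | X ω = k}.indicator (fun _ => φ k) ω
        + {ω | M < X ω}.indicator (fun _ => C) ω := by
    funext ω
    simp only [Set.indicator_apply, Set.mem_ofPred_eq, eq_comm (a := X ω), sum_ite_eq', mem_Ioc]
    rcases le_or_gt (X ω) M with hle | hgt
    · rw [if_pos ⟨hpos ω, hle⟩, if_neg hle.not_gt, add_zero]
    · rw [if_neg (by omega), if_pos hgt, zero_add, hφ _ hgt]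
  have hint : ∀ k ∈ Ioc 0 M, Integrable ({ω | X ω = k}.indicator fun _ => φ k) μ :=
    fun k _ => (integrable_const (φ k)).indicator (hmeas k)
  rw [hdecomp, integral_add (integrable_finsetSum _ hint) ((integrable_const C).indicator htail),
    integral_finsetSum _ hint, integral_indicator_const _ htail]
  simp only [integral_indicator_const _ (hmeas _), smul_eq_mul, measureReal_def, mul_comm]

theorem IsResidualLife.toReal_mul_integral_eq [IsFiniteMeasure μ] {L X : Ω → ℕ} {b N : ℕ}
    (hres : IsResidualLife μ L X b) (hL : Measurable L) (hX : Measurable X)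
    (hpos : ∀ ω, 1 ≤ X ω) (hbN : b ≤ N) {ψ : ℕ → ℝ} {C : ℝ} (hψ : ∀ j, N < j → ψ j = C) :
    (μ {ω | b < L ω}).toReal * ∫ ω, ψ (b + X ω) ∂μ
      = ∑ j ∈ Ioc b N, ψ j * (μ {ω | L ω = j}).toReal + C * (μ {ω | N < L ω}).toReal := by
  obtain ⟨M, rfl⟩ := Nat.exists_eq_add_of_le hbN
  have hIoc : Ioc b (b + M) = (Ioc 0 M).map (addLeftEmbedding b) := by
    rw [map_add_left_Ioc, add_zero]
  rw [integral_comp_eq_sum_add_tail (M := M) hX hpos fun k hk => hψ (b + k) (by omega),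
    mul_add, mul_sum, hIoc, sum_map, ← hres M]
  congr 1
  · refine sum_congr rfl fun k hk => ?_
    rw [addLeftEmbedding_apply, ← hres.mul_toReal_measure_eq hL hX (mem_Ioc.1 hk).1]
    ring
  · ring

theorem IsResidualLife.toReal_mul_integral_sub_eq_sum [IsFiniteMeasure μ] {L X Y : Ω → ℕ}
    {b δ N : ℕ} (hX : IsResidualLife μ L X b) (hY : IsResidualLife μ L Y (b + δ))
    (hL : Measurable L) (hXm : Measurable X) (hYm : Measurable Y) (hXpos : ∀ ω, 1 ≤ X ω)
    (hYpos : ∀ ω, 1 ≤ Y ω) (hN : b + δ ≤ N) {ψ : ℕ → ℝ} {C : ℝ} (hψ : ∀ j, N < j → ψ j = C) :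
    (μ {ω | b < L ω}).toReal * ∫ ω, ψ (b + X ω) ∂μ
      - (μ {ω | b + δ < L ω}).toReal * ∫ ω, ψ (b + δ + Y ω) ∂μ
      = ∑ u ∈ Icc 1 δ, ψ (b + u) * (μ {ω | L ω = b + u}).toReal := by
  rw [hX.toReal_mul_integral_eq hL hXm hXpos (le_trans (Nat.le_add_right b δ) hN) hψ,
    hY.toReal_mul_integral_eq hL hYm hYpos hN hψ,
    ← sum_Ioc_consecutive _ (Nat.le_add_right b δ) hN, add_assoc, add_sub_cancel_right,
    ← Icc_add_one_left_eq_Ioc, ← map_add_left_Icc, sum_map]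
  rfl

end ResidualLife

theorem survival_weighted_difference_independent_of_t_general
    {Ω : Type*} [MeasureSpace Ω] [IsProbabilityMeasure (ℙ : Measure Ω)]
    (θ β g h m : ℝ)
    (L : Ω → ℕ) (hmeasL : Measurable L)
    (hsurvL : ∀ u : ℕ, ℙ {ω | u < L ω} = ENNReal.ofReal (Real.exp (-θ * (u : ℝ) ^ β)))
    (c : ℝ)
    (T s : ℕ)
    (a δ : ℕ)
    -- residual life at age a
    (La : Ω → ℕ) (hmeasLa : Measurable La) (hposLa : ∀ ω, 1 ≤ La ω)
    (hsurvLa : ∀ u : ℕ, ℙ {ω | u < La ω}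
      = ENNReal.ofReal (Real.exp (θ * ((a : ℝ) ^ β - ((a : ℝ) + u) ^ β))))
    -- residual life at age a + δ
    (Lad : Ω → ℕ) (hmeasLad : Measurable Lad) (hposLad : ∀ ω, 1 ≤ Lad ω)
    (hsurvLad : ∀ u : ℕ, ℙ {ω | u < Lad ω}
      = ENNReal.ofReal (Real.exp (θ * (((a + δ : ℕ) : ℝ) ^ β
          - (((a + δ : ℕ) : ℝ) + u) ^ β))))
    -- the cost function Q_{(s,a)} and the objective f_{(s,a)}
    (Qa : ℕ → ℝ → ℝ)
    (hQa : ∀ t : ℕ, s + 1 ≤ t → t ≤ T → ∀ u : ℝ,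
      Qa t u = if u ≤ (t : ℝ) then g + ((T : ℝ) - u) * c
              else h + ((t : ℝ) - (s : ℝ) + (a : ℝ)) * m + ((T : ℝ) - (t : ℝ)) * c)
    (hQa' : ∀ u : ℝ,
      Qa (T + 1) u = if u ≤ (T : ℝ) then g + ((T : ℝ) - u) * c else 0)
    (fa : ℕ → ℝ)
    (hfa : ∀ t : ℕ, fa t = ∫ ω, Qa t ((s : ℝ) + (La ω : ℝ)) ∂ℙ)
    -- the cost function Q_{(s+δ,a+δ)} and the objective f_{(s+δ,a+δ)}
    (Qd : ℕ → ℝ → ℝ)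
    (hQd : ∀ t : ℕ, s + δ + 1 ≤ t → t ≤ T → ∀ u : ℝ,
      Qd t u = if u ≤ (t : ℝ) then g + ((T : ℝ) - u) * c
              else h + ((t : ℝ) - ((s : ℝ) + (δ : ℝ)) + ((a : ℝ) + (δ : ℝ))) * m
                    + ((T : ℝ) - (t : ℝ)) * c)
    (hQd' : ∀ u : ℝ,
      Qd (T + 1) u = if u ≤ (T : ℝ) then g + ((T : ℝ) - u) * c else 0)
    (fd : ℕ → ℝ)
    (hfd : ∀ t : ℕ, fd t = ∫ ω, Qd t (((s : ℝ) + (δ : ℝ)) + (Lad ω : ℝ)) ∂ℙ) :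
    ∀ t : ℕ, s + δ + 1 ≤ t → t ≤ T + 1 →
      (ℙ {ω | a < L ω}).toReal * fa t - (ℙ {ω | a + δ < L ω}).toReal * fd t
        = ∑ u ∈ Finset.Icc 1 δ,
            (g + ((T : ℝ) - (s : ℝ) - (u : ℝ)) * c) * (ℙ {ω | L ω = a + u}).toReal := by
  intro t hst htT
  obtain ⟨τ, K, hsτ, hτt, hQa_t, hQd_t⟩ : ∃ (τ : ℕ) (K : ℝ), s + δ ≤ τ ∧ τ ≤ t ∧
      (∀ u, Qa t u = if u ≤ τ then g + (T - u) * c else K) ∧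
      ∀ u, Qd t u = if u ≤ τ then g + (T - u) * c else K := by
    rcases Nat.lt_or_ge t (T + 1) with hlt | hge
    · refine ⟨t, h + (t - s + a) * m + (T - t) * c, by omega, le_rfl,
        hQa t (by omega) (by omega), fun u => ?_⟩
      rw [hQd t hst (by omega)]
      split_ifs <;> ring
    · obtain rfl : t = T + 1 := by omega
      exact ⟨T, 0, by omega, by omega, hQa', hQd'⟩
  have hQ : Qd t = Qa t := funext fun u => by rw [hQa_t, hQd_t]
  -- the cost when `L` ends at age `j`, that is at time `s + j - a`
  let ψ : ℕ → ℝ := fun j => Qa t (s + j - a)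
  have hψ : ∀ j, a + (t - s) < j → ψ j = K := fun j hj => by
    have hτj : ((τ + a : ℕ) : ℝ) < (s + j : ℕ) := Nat.cast_lt.2 (by omega)
    push_cast at hτj
    simp only [ψ, hQa_t, if_neg (by linarith : ¬(s : ℝ) + j - a ≤ τ)]
  have hfa' : fa t = ∫ ω, ψ (a + La ω) ∂ℙ := by
    simp only [hfa, ψ, Nat.cast_add]
    exact integral_congr_ae (ae_of_all _ fun ω => congrArg (Qa t) (by ring))
  have hfd' : fd t = ∫ ω, ψ (a + δ + Lad ω) ∂ℙ := by
    simp only [hfd, hQ, ψ, Nat.cast_add]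
    exact integral_congr_ae (ae_of_all _ fun ω => congrArg (Qa t) (by ring))
  rw [hfa', hfd', (isResidualLife_of_weibull hsurvL hsurvLa).toReal_mul_integral_sub_eq_sum
    (isResidualLife_of_weibull hsurvL hsurvLad) hmeasL hmeasLa hmeasLad hposLa hposLad
    (by omega : a + δ ≤ a + (t - s)) hψ]
  refine sum_congr rfl fun u hu => ?_
  have hsu : (s : ℝ) + u ≤ τ := by exact_mod_cast (by grind : s + u ≤ τ)
  simp only [ψ, hQa_t, Nat.cast_add]
  rw [show (s : ℝ) + (a + u) - a = s + u by ring, if_pos hsu]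
  ring

/-- For integers `a ≥ 0` and `δ ≥ 1` with `s + δ < T`, and every integer `t`
with `s + δ + 1 ≤ t ≤ T + 1`, the difference
`P(L > a)·f_{(s,a)}(t) − P(L > a + δ)·f_{(s+δ,a+δ)}(t)` equals
`Σ_{u=1}^{δ} (g + (T − s − u) c)·P(L = a + u)`; in particular it does not depend on `t`. -/
theorem survival_weighted_difference_independent_of_t
    {Ω : Type*} [MeasureSpace Ω] [IsProbabilityMeasure (ℙ : Measure Ω)]
    (θ β g h m : ℝ) (hθ : 0 < θ) (hβ : 1 < β) (hg : 0 ≤ g) (hh : 0 ≤ h) (hm : 0 ≤ m)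
    (L : Ω → ℕ) (hmeasL : Measurable L) (hposL : ∀ ω, 1 ≤ L ω)
    (hsurvL : ∀ u : ℕ, ℙ {ω | u < L ω} = ENNReal.ofReal (Real.exp (-θ * (u : ℝ) ^ β)))
    (q : ℕ → ℝ)
    (hq : ∀ t : ℕ, 1 ≤ t →
      q t = ((1 - Real.exp (-θ * (t : ℝ) ^ β)) * g
            + Real.exp (-θ * (t : ℝ) ^ β) * (h + m * t))
          / ((∑ k ∈ Finset.Icc 1 t,
              (Real.exp (-θ * ((k : ℝ) - 1) ^ β) - Real.exp (-θ * (k : ℝ) ^ β)) * (k : ℝ))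
            + Real.exp (-θ * (t : ℝ) ^ β) * (t : ℝ)))
    (c : ℝ) (hc : c = ⨅ t : ℕ, q (t + 1))
    (T s : ℕ) (hT : 1 ≤ T) (hsT : s < T)
    (a δ : ℕ) (hδ : 1 ≤ δ) (hsδ : s + δ < T)
    -- residual life at age a
    (La : Ω → ℕ) (hmeasLa : Measurable La) (hposLa : ∀ ω, 1 ≤ La ω)
    (hsurvLa : ∀ u : ℕ, ℙ {ω | u < La ω}
      = ENNReal.ofReal (Real.exp (θ * ((a : ℝ) ^ β - ((a : ℝ) + u) ^ β))))
    -- residual life at age a + δ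
    (Lad : Ω → ℕ) (hmeasLad : Measurable Lad) (hposLad : ∀ ω, 1 ≤ Lad ω)
    (hsurvLad : ∀ u : ℕ, ℙ {ω | u < Lad ω}
      = ENNReal.ofReal (Real.exp (θ * (((a + δ : ℕ) : ℝ) ^ β
          - (((a + δ : ℕ) : ℝ) + u) ^ β))))
    -- the cost function Q_{(s,a)} and the objective f_{(s,a)}
    (Qa : ℕ → ℝ → ℝ)
    (hQa : ∀ t : ℕ, s + 1 ≤ t → t ≤ T → ∀ u : ℝ,
      Qa t u = if u ≤ (t : ℝ) then g + ((T : ℝ) - u) * c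
              else h + ((t : ℝ) - (s : ℝ) + (a : ℝ)) * m + ((T : ℝ) - (t : ℝ)) * c)
    (hQa' : ∀ u : ℝ,
      Qa (T + 1) u = if u ≤ (T : ℝ) then g + ((T : ℝ) - u) * c else 0)
    (fa : ℕ → ℝ)
    (hfa : ∀ t : ℕ, fa t = ∫ ω, Qa t ((s : ℝ) + (La ω : ℝ)) ∂ℙ)
    -- the cost function Q_{(s+δ,a+δ)} and the objective f_{(s+δ,a+δ)}
    (Qd : ℕ → ℝ → ℝ)
    (hQd : ∀ t : ℕ, s + δ + 1 ≤ t → t ≤ T → ∀ u : ℝ,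
      Qd t u = if u ≤ (t : ℝ) then g + ((T : ℝ) - u) * c
              else h + ((t : ℝ) - ((s : ℝ) + (δ : ℝ)) + ((a : ℝ) + (δ : ℝ))) * m
                    + ((T : ℝ) - (t : ℝ)) * c)
    (hQd' : ∀ u : ℝ,
      Qd (T + 1) u = if u ≤ (T : ℝ) then g + ((T : ℝ) - u) * c else 0)
    (fd : ℕ → ℝ)
    (hfd : ∀ t : ℕ, fd t = ∫ ω, Qd t (((s : ℝ) + (δ : ℝ)) + (Lad ω : ℝ)) ∂ℙ) :
    ∀ t : ℕ, s + δ + 1 ≤ t → t ≤ T + 1 →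
      (ℙ {ω | a < L ω}).toReal * fa t - (ℙ {ω | a + δ < L ω}).toReal * fd t
        = ∑ u ∈ Finset.Icc 1 δ,
            (g + ((T : ℝ) - (s : ℝ) - (u : ℝ)) * c) * (ℙ {ω | L ω = a + u}).toReal :=
  survival_weighted_difference_independent_of_t_general θ β g h m L hmeasL hsurvL c T s a δ La
    hmeasLa hposLa hsurvLa Lad hmeasLad hposLad hsurvLad Qa hQa hQa' fa hfa Qd hQd hQd' fd hfd
end

section
/- (Proposition 2.) Let a ≥ 0 and δ ≥ 1 be integers with s + δ < T, and let t* ∈ {s + 1, …, T + 1} satisfy f_{(s,a)}(t*) ≤ f_{(s,a)}(t) for all t ∈ {s + 1, …, T + 1}. If t* > s + δ and t* ≤ T, then f_{(s+δ,a+δ)}(t*) ≤ f_{(s+δ,a+δ)}(t) for all t ∈ {s + δ + 1, …, T + 1}; that is, t* also minimizes the expected maintenance cost for the planning period starting at time s + δ with a component of age a + δ. -/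
/-! The residual life at age `a + δ` is the residual life at age `a`, shifted by `δ` and
conditioned on exceeding `δ`: its survival function is `j ↦ S (δ + j) / S δ`, where `S` is that of
`L_a`. For `t > s + δ` the cost `Q_{(s,a)}(t, s + L_a)` does not depend on `t` on the event
`L_a ≤ δ`, so on `{s + δ + 1, …, T + 1}` the objective `f_{(s+δ,a+δ)}` equals
`(f_{(s,a)} - C) / S δ` for a constant `C`, an increasing affine function of `f_{(s,a)}`. -/

open MeasureTheory ProbabilityTheory Real Finset

/-- `E[if N ≤ n then φ N else K]` for a random variable `N ≥ 1` with survival function `S`. -/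
noncomputable def truncatedExpectation (S φ : ℕ → ℝ) (K : ℝ) (n : ℕ) : ℝ :=
  ∑ k ∈ range n, φ (k + 1) * (S k - S (k + 1)) + K * S n

theorem truncatedExpectation_const_mul (ρ : ℝ) (S φ : ℕ → ℝ) (K : ℝ) (n : ℕ) :
    truncatedExpectation (fun j => ρ * S j) φ K n = ρ * truncatedExpectation S φ K n := by
  unfold truncatedExpectation
  rw [mul_add, mul_sum]
  congr 1
  · exact sum_congr rfl fun k _ => by ring
  · ring

theorem truncatedExpectation_shift (S φ : ℕ → ℝ) (K : ℝ) (δ n : ℕ) :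
    truncatedExpectation (fun j => S (δ + j)) (fun k => φ (δ + k)) K n
      = truncatedExpectation S φ K (δ + n) - ∑ k ∈ range δ, φ (k + 1) * (S k - S (k + 1)) := by
  simp only [truncatedExpectation, sum_range_add, add_assoc]
  ring

theorem ite_le_succ_eq {Ω : Type*} (N : Ω → ℕ) (φ : ℕ → ℝ) (K : ℝ) (n : ℕ) :
    (fun ω => if N ω ≤ n + 1 then φ (N ω) else K)
      = (fun ω => if N ω ≤ n then φ (N ω) else K)
        + (N ⁻¹' {n + 1}).indicator (fun _ => φ (n + 1) - K) := by
  funext ω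
  by_cases hω : N ω = n + 1
  · simp [hω]
  · rw [Pi.add_apply, Set.indicator_of_notMem (by simpa using hω), add_zero]
    by_cases h : N ω ≤ n
    · rw [if_pos h, if_pos (by omega)]
    · rw [if_neg h, if_neg (by omega)]

section IntegerValued

variable {Ω : Type*} [MeasurableSpace Ω] {μ : Measure Ω} [IsFiniteMeasure μ] {N : Ω → ℕ}

theorem measureReal_preimage_singleton_succ (hN : Measurable N) (n : ℕ) :
    μ.real (N ⁻¹' {n + 1}) = μ.real {ω | n < N ω} - μ.real {ω | n + 1 < N ω} := by
  rw [← measureReal_sdiff _ (measurableSet_lt measurable_const hN)]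
  · congr 1
    ext ω
    simp only [Set.mem_preimage, Set.mem_singleton_iff, Set.mem_sdiff, Set.mem_ofPred_eq]
    omega
  · intro ω hω
    simp only [Set.mem_ofPred_eq] at hω ⊢
    omega

theorem integrable_ite_le (hN : Measurable N) (hpos : ∀ ω, 1 ≤ N ω) (φ : ℕ → ℝ) (K : ℝ)
    (n : ℕ) : Integrable (fun ω => if N ω ≤ n then φ (N ω) else K) μ := by
  induction n with
  | zero =>
    simp only [show ∀ ω, ¬N ω ≤ 0 from fun ω => by have := hpos ω; omega, if_false]
    exact integrable_const K
  | succ n ih =>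
    rw [ite_le_succ_eq]
    exact ih.add ((integrable_const _).indicator (hN (measurableSet_singleton _)))

theorem integral_ite_le_eq_truncatedExpectation (hN : Measurable N) (hpos : ∀ ω, 1 ≤ N ω)
    {S : ℕ → ℝ} (hS : ∀ j, μ.real {ω | j < N ω} = S j) (φ : ℕ → ℝ) (K : ℝ) (n : ℕ) :
    ∫ ω, (if N ω ≤ n then φ (N ω) else K) ∂μ = truncatedExpectation S φ K n := by
  induction n with
  | zero =>
    simp only [show ∀ ω, ¬N ω ≤ 0 from fun ω => by have := hpos ω; omega, if_false]
    have huniv : {ω | 0 < N ω} = Set.univ := Set.eq_univ_of_forall hpos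
    rw [integral_const, smul_eq_mul, truncatedExpectation, ← hS 0, huniv]
    simp [mul_comm]
  | succ n ih =>
    have hmeas : MeasurableSet (N ⁻¹' {n + 1}) := hN (measurableSet_singleton _)
    rw [ite_le_succ_eq, integral_add' (integrable_ite_le hN hpos φ K n)
        ((integrable_const _).indicator hmeas), ih, integral_indicator_const _ hmeas,
      measureReal_preimage_singleton_succ hN, hS, hS, smul_eq_mul]
    simp only [truncatedExpectation, sum_range_succ]
    ring

theorem integral_comp_add_eq_truncatedExpectation (hN : Measurable N) (hpos : ∀ ω, 1 ≤ N ω)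
    {S : ℕ → ℝ} (hS : ∀ j, μ.real {ω | j < N ω} = S j) {Q ψ : ℝ → ℝ} {K x τ : ℝ} {n : ℕ}
    (hQ : ∀ u, Q u = if u ≤ τ then ψ u else K) (hτ : τ = x + n) :
    ∫ ω, Q (x + N ω) ∂μ = truncatedExpectation S (fun k => ψ (x + k)) K n := by
  rw [← integral_ite_le_eq_truncatedExpectation hN hpos hS]
  congr 1
  funext ω
  rw [hQ, hτ]
  simp only [add_le_add_iff_left, Nat.cast_le]

theorem integral_comp_add_residual_shift {N N' : Ω → ℕ}
    (hN : Measurable N) (hpos : ∀ ω, 1 ≤ N ω) {S : ℕ → ℝ}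
    (hS : ∀ j, μ.real {ω | j < N ω} = S j) (hN' : Measurable N') (hpos' : ∀ ω, 1 ≤ N' ω)
    {δ : ℕ} (hS' : ∀ j, μ.real {ω | j < N' ω} = (S δ)⁻¹ * S (δ + j))
    {Q ψ : ℝ → ℝ} {K : ℝ} {σ τ : ℕ} (hστ : σ + δ ≤ τ)
    (hQ : ∀ u, Q u = if u ≤ τ then ψ u else K) :
    ∫ ω, Q ((σ : ℝ) + δ + N' ω) ∂μ
      = (S δ)⁻¹ * (∫ ω, Q (σ + N ω) ∂μ
          - ∑ k ∈ range δ, ψ (σ + (k + 1 : ℕ)) * (S k - S (k + 1))) := by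
  have hτ : (τ : ℝ) = σ + δ + (τ - σ - δ : ℕ) := by
    rw [Nat.cast_sub (by omega), Nat.cast_sub (by omega)]
    ring
  rw [integral_comp_add_eq_truncatedExpectation hN' hpos' hS' hQ hτ,
    integral_comp_add_eq_truncatedExpectation hN hpos hS hQ
      (n := δ + (τ - σ - δ)) (by rw [hτ]; push_cast; ring),
    truncatedExpectation_const_mul, ← truncatedExpectation_shift S (fun k => ψ (σ + k))]
  congr 3
  funext k
  push_cast
  ring_nf

end IntegerValued

/-- Survival function `j ↦ P(L_x > j)` of the residual life at age `x` of a `W(θ, β)` lifetime. -/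
noncomputable def weibullResidualSurvival (θ β x : ℝ) (j : ℕ) : ℝ :=
  exp (θ * (x ^ β - (x + j) ^ β))

theorem weibullResidualSurvival_add (θ β x : ℝ) (δ j : ℕ) :
    weibullResidualSurvival θ β (x + δ) j
      = (weibullResidualSurvival θ β x δ)⁻¹ * weibullResidualSurvival θ β x (δ + j) := by
  simp only [weibullResidualSurvival, ← exp_neg, ← exp_add, Nat.cast_add, add_assoc]
  ring_nf

theorem minimizer_transfers_to_shifted_problem_general
    {Ω : Type*} [MeasureSpace Ω] [IsProbabilityMeasure (ℙ : Measure Ω)]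
    (θ β g h m : ℝ)
    (c : ℝ)
    (T s : ℕ)
    (a δ : ℕ)
    -- residual life at age a
    (La : Ω → ℕ) (hmeasLa : Measurable La) (hposLa : ∀ ω, 1 ≤ La ω)
    (hsurvLa : ∀ u : ℕ, ℙ {ω | u < La ω}
      = ENNReal.ofReal (Real.exp (θ * ((a : ℝ) ^ β - ((a : ℝ) + u) ^ β))))
    -- residual life at age a + δ
    (Lad : Ω → ℕ) (hmeasLad : Measurable Lad) (hposLad : ∀ ω, 1 ≤ Lad ω)
    (hsurvLad : ∀ u : ℕ, ℙ {ω | u < Lad ω}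
      = ENNReal.ofReal (Real.exp (θ * (((a + δ : ℕ) : ℝ) ^ β
          - (((a + δ : ℕ) : ℝ) + u) ^ β))))
    -- the cost function Q_{(s,a)} and the objective f_{(s,a)}
    (Qa : ℕ → ℝ → ℝ)
    (hQa : ∀ t : ℕ, s + 1 ≤ t → t ≤ T → ∀ u : ℝ,
      Qa t u = if u ≤ (t : ℝ) then g + ((T : ℝ) - u) * c
              else h + ((t : ℝ) - (s : ℝ) + (a : ℝ)) * m + ((T : ℝ) - (t : ℝ)) * c)
    (hQa' : ∀ u : ℝ,
      Qa (T + 1) u = if u ≤ (T : ℝ) then g + ((T : ℝ) - u) * c else 0)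
    (fa : ℕ → ℝ)
    (hfa : ∀ t : ℕ, fa t = ∫ ω, Qa t ((s : ℝ) + (La ω : ℝ)) ∂ℙ)
    -- the cost function Q_{(s+δ,a+δ)} and the objective f_{(s+δ,a+δ)}
    (Qd : ℕ → ℝ → ℝ)
    (hQd : ∀ t : ℕ, s + δ + 1 ≤ t → t ≤ T → ∀ u : ℝ,
      Qd t u = if u ≤ (t : ℝ) then g + ((T : ℝ) - u) * c
              else h + ((t : ℝ) - ((s : ℝ) + (δ : ℝ)) + ((a : ℝ) + (δ : ℝ))) * m
                    + ((T : ℝ) - (t : ℝ)) * c)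
    (hQd' : ∀ u : ℝ,
      Qd (T + 1) u = if u ≤ (T : ℝ) then g + ((T : ℝ) - u) * c else 0)
    (fd : ℕ → ℝ)
    (hfd : ∀ t : ℕ, fd t = ∫ ω, Qd t (((s : ℝ) + (δ : ℝ)) + (Lad ω : ℝ)) ∂ℙ)
    (tstar : ℕ)
    (hmin : ∀ t : ℕ, s + 1 ≤ t → t ≤ T + 1 → fa tstar ≤ fa t)
    (htstar3 : s + δ < tstar) (htstar4 : tstar ≤ T) :
    ∀ t : ℕ, s + δ + 1 ≤ t → t ≤ T + 1 → fd tstar ≤ fd t := by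
  set S := weibullResidualSurvival θ β a
  have hSa (j : ℕ) : (ℙ : Measure Ω).real {ω | j < La ω} = S j := by
    rw [measureReal_def, hsurvLa, ENNReal.toReal_ofReal (exp_nonneg _)]
    rfl
  have hSd (j : ℕ) : (ℙ : Measure Ω).real {ω | j < Lad ω} = (S δ)⁻¹ * S (δ + j) := by
    rw [measureReal_def, hsurvLad, ENNReal.toReal_ofReal (exp_nonneg _),
      ← weibullResidualSurvival_add, Nat.cast_add]
    rfl
  obtain ⟨C, hshift⟩ : ∃ C, ∀ t, s + δ + 1 ≤ t → t ≤ T + 1 → fd t = (S δ)⁻¹ * (fa t - C) := by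
    refine ⟨∑ k ∈ range δ, (g + (T - (s + (k + 1 : ℕ) : ℝ)) * c) * (S k - S (k + 1)),
      fun t ht₁ ht₂ => ?_⟩
    rw [hfa, hfd]
    rcases (by omega : t ≤ T ∨ t = T + 1) with ht | rfl
    · have hQ : Qd t = Qa t := funext fun u => by
        rw [hQa t (by omega) ht, hQd t ht₁ ht]
        congr 1
        ring
      rw [hQ]
      exact integral_comp_add_residual_shift hmeasLa hposLa hSa hmeasLad hposLad hSd
        (by omega) (hQa t (by omega) ht)
    · have hQ : Qd (T + 1) = Qa (T + 1) := funext fun u => by rw [hQa', hQd']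
      rw [hQ]
      exact integral_comp_add_residual_shift hmeasLa hposLa hSa hmeasLad hposLad hSd
        (by omega) hQa'
  intro t ht₁ ht₂
  rw [hshift tstar (by omega) (by omega), hshift t ht₁ ht₂]
  exact mul_le_mul_of_nonneg_left (sub_le_sub_right (hmin t (by omega) ht₂) C)
    (inv_nonneg.mpr (exp_nonneg _))

/-- Proposition 2: Let `a ≥ 0` and `δ ≥ 1` with `s + δ < T`, and let
`t*` minimize `f_{(s,a)}` over `{s + 1, …, T + 1}`. If `t* > s + δ` and `t* ≤ T`,
then `t*` also minimizes `f_{(s+δ,a+δ)}` over `{s + δ + 1, …, T + 1}`. -/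
theorem minimizer_transfers_to_shifted_problem
    {Ω : Type*} [MeasureSpace Ω] [IsProbabilityMeasure (ℙ : Measure Ω)]
    (θ β g h m : ℝ) (hθ : 0 < θ) (hβ : 1 < β) (hg : 0 ≤ g) (hh : 0 ≤ h) (hm : 0 ≤ m)
    (L : Ω → ℕ) (hmeasL : Measurable L) (hposL : ∀ ω, 1 ≤ L ω)
    (hsurvL : ∀ u : ℕ, ℙ {ω | u < L ω} = ENNReal.ofReal (Real.exp (-θ * (u : ℝ) ^ β)))
    (q : ℕ → ℝ)
    (hq : ∀ t : ℕ, 1 ≤ t →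
      q t = ((1 - Real.exp (-θ * (t : ℝ) ^ β)) * g
            + Real.exp (-θ * (t : ℝ) ^ β) * (h + m * t))
          / ((∑ k ∈ Finset.Icc 1 t,
              (Real.exp (-θ * ((k : ℝ) - 1) ^ β) - Real.exp (-θ * (k : ℝ) ^ β)) * (k : ℝ))
            + Real.exp (-θ * (t : ℝ) ^ β) * (t : ℝ)))
    (c : ℝ) (hc : c = ⨅ t : ℕ, q (t + 1))
    (T s : ℕ) (hT : 1 ≤ T) (hsT : s < T)
    (a δ : ℕ) (hδ : 1 ≤ δ) (hsδ : s + δ < T)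
    -- residual life at age a
    (La : Ω → ℕ) (hmeasLa : Measurable La) (hposLa : ∀ ω, 1 ≤ La ω)
    (hsurvLa : ∀ u : ℕ, ℙ {ω | u < La ω}
      = ENNReal.ofReal (Real.exp (θ * ((a : ℝ) ^ β - ((a : ℝ) + u) ^ β))))
    -- residual life at age a + δ
    (Lad : Ω → ℕ) (hmeasLad : Measurable Lad) (hposLad : ∀ ω, 1 ≤ Lad ω)
    (hsurvLad : ∀ u : ℕ, ℙ {ω | u < Lad ω}
      = ENNReal.ofReal (Real.exp (θ * (((a + δ : ℕ) : ℝ) ^ β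
          - (((a + δ : ℕ) : ℝ) + u) ^ β))))
    -- the cost function Q_{(s,a)} and the objective f_{(s,a)}
    (Qa : ℕ → ℝ → ℝ)
    (hQa : ∀ t : ℕ, s + 1 ≤ t → t ≤ T → ∀ u : ℝ,
      Qa t u = if u ≤ (t : ℝ) then g + ((T : ℝ) - u) * c
              else h + ((t : ℝ) - (s : ℝ) + (a : ℝ)) * m + ((T : ℝ) - (t : ℝ)) * c)
    (hQa' : ∀ u : ℝ,
      Qa (T + 1) u = if u ≤ (T : ℝ) then g + ((T : ℝ) - u) * c else 0)
    (fa : ℕ → ℝ)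
    (hfa : ∀ t : ℕ, fa t = ∫ ω, Qa t ((s : ℝ) + (La ω : ℝ)) ∂ℙ)
    -- the cost function Q_{(s+δ,a+δ)} and the objective f_{(s+δ,a+δ)}
    (Qd : ℕ → ℝ → ℝ)
    (hQd : ∀ t : ℕ, s + δ + 1 ≤ t → t ≤ T → ∀ u : ℝ,
      Qd t u = if u ≤ (t : ℝ) then g + ((T : ℝ) - u) * c
              else h + ((t : ℝ) - ((s : ℝ) + (δ : ℝ)) + ((a : ℝ) + (δ : ℝ))) * m
                    + ((T : ℝ) - (t : ℝ)) * c)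
    (hQd' : ∀ u : ℝ,
      Qd (T + 1) u = if u ≤ (T : ℝ) then g + ((T : ℝ) - u) * c else 0)
    (fd : ℕ → ℝ)
    (hfd : ∀ t : ℕ, fd t = ∫ ω, Qd t (((s : ℝ) + (δ : ℝ)) + (Lad ω : ℝ)) ∂ℙ)
    (tstar : ℕ) (htstar1 : s + 1 ≤ tstar) (htstar2 : tstar ≤ T + 1)
    (hmin : ∀ t : ℕ, s + 1 ≤ t → t ≤ T + 1 → fa tstar ≤ fa t)
    (htstar3 : s + δ < tstar) (htstar4 : tstar ≤ T) :
    ∀ t : ℕ, s + δ + 1 ≤ t → t ≤ T + 1 → fd tstar ≤ fd t :=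
  minimizer_transfers_to_shifted_problem_general θ β g h m c T s a δ La hmeasLa hposLa hsurvLa Lad
    hmeasLad hposLad hsurvLad Qa hQa hQa' fa hfa Qd hQd hQd' fd hfd tstar hmin htstar3 htstar4
end

section
/- For every integer t with s + 1 ≤ t ≤ T, one has f_{(s,0)}(t) = (T − s) c + (q_{t−s} − c)·E[min(L, t − s)], where L has the discrete Weibull distribution W(θ,β). -/
/-!
On `{L ≤ t - s}` the integrand is affine in `L`, elsewhere it is constant, so its mean is an
affine combination of `E[min(L, t - s)]` and `P(L > t - s)`. By the tail-sum formula
`E[min(L, n)] = ∑_{j < n} P(L > j)`, and by Abel summation the denominator of `q_n` is the same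
sum; multiplying `q_n` by it recovers the numerator, which absorbs the remaining terms.
-/

open MeasureTheory ProbabilityTheory Real

open Finset in
theorem sum_Icc_sub_mul_add_mul_eq_sum_range (S : ℝ → ℝ) (N : ℕ) :
    ∑ k ∈ Icc 1 N, (S ((k : ℝ) - 1) - S k) * (k : ℝ) + S N * N = ∑ j ∈ range N, S j := by
  induction N with
  | zero => simp
  | succ N ih =>
    rw [sum_Icc_succ_top (by omega), sum_range_succ, ← ih]
    push_cast
    rw [add_sub_cancel_right]
    ring

open Finset in
theorem natCast_min_eq_sum_indicator {Ω : Type*} (L : Ω → ℕ) (n : ℕ) (ω : Ω) :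
    min (L ω : ℝ) n = ∑ j ∈ range n, {ω | j < L ω}.indicator 1 ω := by
  induction n with
  | zero => simp
  | succ n ih =>
    have hsucc : min (L ω) (n + 1) = min (L ω) n + if n < L ω then 1 else 0 := by
      split_ifs <;> omega
    rw [sum_range_succ, ← ih, ← Nat.cast_min, ← Nat.cast_min, hsucc, Set.indicator_apply]
    by_cases hn : n < L ω <;> simp [hn]

section
variable {Ω : Type*} [MeasurableSpace Ω] {μ : Measure Ω} {L : Ω → ℕ}

theorem integral_natCast_min_eq_sum_measureReal [IsFiniteMeasure μ] (hL : Measurable L) (n : ℕ) :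
    ∫ ω, min (L ω : ℝ) n ∂μ = ∑ j ∈ Finset.range n, μ.real {ω | j < L ω} := by
  have hmeas (j : ℕ) : MeasurableSet {ω | j < L ω} := hL (by trivial)
  simp_rw [natCast_min_eq_sum_indicator L n]
  rw [integral_finsetSum _ fun j _ ↦ (integrable_const 1).indicator (hmeas j)]
  exact Finset.sum_congr rfl fun j _ ↦ integral_indicator_one (hmeas j)

theorem integral_ite_le_affine [IsProbabilityMeasure μ] (hL : Measurable L) (n : ℕ) (a b c : ℝ) :
    ∫ ω, (if L ω ≤ n then a - c * L ω else b) ∂μ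
      = a - c * ∫ ω, min (L ω : ℝ) n ∂μ + (b - (a - c * n)) * μ.real {ω | n < L ω} := by
  have hmeas : MeasurableSet {ω | n < L ω} := hL (by trivial)
  have hmin_int : Integrable (fun ω ↦ min (L ω : ℝ) n) μ := by
    refine (integrable_const (n : ℝ)).mono' ?_ (ae_of_all _ fun ω ↦ ?_)
    · exact (measurable_from_nat.comp hL).min measurable_const |>.aestronglyMeasurable
    · simp [abs_of_nonneg]
  have hpt (ω : Ω) : (if L ω ≤ n then a - c * L ω else b)
      = a - c * min (L ω : ℝ) n + (b - (a - c * n)) * {ω | n < L ω}.indicator 1 ω := by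
    by_cases hLn : L ω ≤ n
    · have : ¬ n < L ω := by omega
      simp [hLn, this]
    · have : n < L ω := by omega
      simp [hLn, this, min_eq_right (Nat.cast_le.mpr this.le)]
  simp_rw [hpt]
  rw [integral_add ?_ (((integrable_const 1).indicator hmeas).const_mul _),
    integral_sub (integrable_const a) (hmin_int.const_mul c), integral_const_mul,
    integral_const_mul, integral_indicator_one hmeas]
  · simp
  · exact (integrable_const a).sub (hmin_int.const_mul c)

end

theorem objective_age_zero_decomposition_general
    {Ω : Type*} [MeasureSpace Ω] [IsProbabilityMeasure (ℙ : Measure Ω)]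
    (θ β g h m : ℝ)
    (L : Ω → ℕ) (hmeasL : Measurable L)
    (hsurvL : ∀ u : ℕ, ℙ {ω | u < L ω} = ENNReal.ofReal (Real.exp (-θ * (u : ℝ) ^ β)))
    (q : ℕ → ℝ)
    (hq : ∀ t : ℕ, 1 ≤ t →
      q t = ((1 - Real.exp (-θ * (t : ℝ) ^ β)) * g
            + Real.exp (-θ * (t : ℝ) ^ β) * (h + m * t))
          / ((∑ k ∈ Finset.Icc 1 t,
              (Real.exp (-θ * ((k : ℝ) - 1) ^ β) - Real.exp (-θ * (k : ℝ) ^ β)) * (k : ℝ))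
            + Real.exp (-θ * (t : ℝ) ^ β) * (t : ℝ)))
    (c : ℝ)
    (T s : ℕ)
    (Q : ℕ → ℝ → ℝ)
    (hQ : ∀ t : ℕ, s + 1 ≤ t → t ≤ T → ∀ u : ℝ,
      Q t u = if u ≤ (t : ℝ) then g + ((T : ℝ) - u) * c
              else h + ((t : ℝ) - (s : ℝ)) * m + ((T : ℝ) - (t : ℝ)) * c)
    (f : ℕ → ℝ)
    (hf : ∀ t : ℕ, f t = ∫ ω, Q t ((s : ℝ) + (L ω : ℝ)) ∂ℙ) :
    ∀ t : ℕ, s + 1 ≤ t → t ≤ T →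
      f t = ((T : ℝ) - (s : ℝ)) * c
        + (q (t - s) - c) * ∫ ω, (min (L ω) (t - s) : ℝ) ∂ℙ := by
  intro t hst htT
  set S : ℝ → ℝ := fun x ↦ Real.exp (-θ * x ^ β)
  obtain ⟨n, rfl⟩ : ∃ n, t = s + n := ⟨t - s, by omega⟩
  have hn : 1 ≤ n := by omega
  have hsurv (j : ℕ) : (ℙ : Measure Ω).real {ω | j < L ω} = S j := by
    rw [measureReal_def, hsurvL, ENNReal.toReal_ofReal (Real.exp_nonneg _)]
  have hmean : ∫ ω, min (L ω : ℝ) n ∂ℙ = ∑ j ∈ Finset.range n, S j := by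
    simp only [integral_natCast_min_eq_sum_measureReal hmeasL, hsurv]
  have hq_mul : q n * ∑ j ∈ Finset.range n, S j = (1 - S n) * g + S n * (h + m * n) := by
    have hpos : 0 < ∑ j ∈ Finset.range n, S j :=
      Finset.sum_pos (fun j _ ↦ Real.exp_pos _) (Finset.nonempty_range_iff.mpr (by omega))
    rw [hq n hn, sum_Icc_sub_mul_add_mul_eq_sum_range S n, div_mul_cancel₀ _ hpos.ne']
  have hft : f (s + n) = ∫ ω, (if L ω ≤ n then (g + (T - s) * c) - c * L ω
      else h + n * m + (T - (s + n : ℕ)) * c) ∂ℙ := by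
    rw [hf]
    refine integral_congr_ae (ae_of_all _ fun ω ↦ ?_)
    have hcond : (s : ℝ) + L ω ≤ (s + n : ℕ) ↔ L ω ≤ n := by
      push_cast
      rw [add_le_add_iff_left, Nat.cast_le]
    dsimp only
    simp only [hQ (s + n) hst htT, hcond]
    split_ifs <;> push_cast <;> ring
  rw [hft, integral_ite_le_affine hmeasL, hsurv, Nat.cast_add, add_sub_cancel_left,
    add_tsub_cancel_left, hmean]
  linear_combination -hq_mul

/-- For every integer `t` with `s + 1 ≤ t ≤ T`,
`f_{(s,0)}(t) = (T − s) c + (q_{t−s} − c)·E[min(L, t − s)]`,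
where `L` has the discrete Weibull distribution `W(θ,β)` and `c = inf_{t ≥ 1} q_t`. -/
theorem objective_age_zero_decomposition
    {Ω : Type*} [MeasureSpace Ω] [IsProbabilityMeasure (ℙ : Measure Ω)]
    (θ β g h m : ℝ) (hθ : 0 < θ) (hβ : 1 < β) (hg : 0 ≤ g) (hh : 0 ≤ h) (hm : 0 ≤ m)
    (L : Ω → ℕ) (hmeasL : Measurable L) (hposL : ∀ ω, 1 ≤ L ω)
    (hsurvL : ∀ u : ℕ, ℙ {ω | u < L ω} = ENNReal.ofReal (Real.exp (-θ * (u : ℝ) ^ β)))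
    (q : ℕ → ℝ)
    (hq : ∀ t : ℕ, 1 ≤ t →
      q t = ((1 - Real.exp (-θ * (t : ℝ) ^ β)) * g
            + Real.exp (-θ * (t : ℝ) ^ β) * (h + m * t))
          / ((∑ k ∈ Finset.Icc 1 t,
              (Real.exp (-θ * ((k : ℝ) - 1) ^ β) - Real.exp (-θ * (k : ℝ) ^ β)) * (k : ℝ))
            + Real.exp (-θ * (t : ℝ) ^ β) * (t : ℝ)))
    (c : ℝ) (hc : c = ⨅ t : ℕ, q (t + 1))
    (T s : ℕ) (hT : 1 ≤ T) (hsT : s < T)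
    (Q : ℕ → ℝ → ℝ)
    (hQ : ∀ t : ℕ, s + 1 ≤ t → t ≤ T → ∀ u : ℝ,
      Q t u = if u ≤ (t : ℝ) then g + ((T : ℝ) - u) * c
              else h + ((t : ℝ) - (s : ℝ)) * m + ((T : ℝ) - (t : ℝ)) * c)
    (f : ℕ → ℝ)
    (hf : ∀ t : ℕ, f t = ∫ ω, Q t ((s : ℝ) + (L ω : ℝ)) ∂ℙ) :
    ∀ t : ℕ, s + 1 ≤ t → t ≤ T →
      f t = ((T : ℝ) - (s : ℝ)) * c
        + (q (t - s) - c) * ∫ ω, (min (L ω) (t - s) : ℝ) ∂ℙ :=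
  objective_age_zero_decomposition_general θ β g h m L hmeasL hsurvL q hq c T s Q hQ f hf
end

section
/- Suppose there exists an integer t₀ ≥ 1 with q_{t₀} = c and t₀ + s ≤ T. Then min over t ∈ {s + 1, …, T} of f_{(s,0)}(t) equals (T − s) c. -/
open MeasureTheory ProbabilityTheory Real

/-!
Replacing the item installed at time `s` at age `r = t - s` (or at failure, if earlier) and
charging `c` per unit of the remaining time costs `(T - s) c + E[cycle cost] - c E[min (L, r)]`
in expectation. The formula for `q_r` is the renewal–reward ratio `E[cycle cost] / E[min (L, r)]`,
so `f_{(s,0)}(s + r) = (T - s) c + E[min (L, r)] (q_r - c)`, which is at least `(T - s) c` since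
`c = inf q`, with equality at `r = t₀`.
-/

section CycleMoments

variable {Ω : Type*} [MeasurableSpace Ω] (μ : Measure Ω) (L : Ω → ℕ)

noncomputable def expectedCycleCost (g h m : ℝ) (r : ℕ) : ℝ :=
  ∫ ω, (if L ω ≤ r then g else h + m * r) ∂μ

noncomputable def expectedCycleLength (r : ℕ) : ℝ :=
  ∫ ω, ((min (L ω) r : ℕ) : ℝ) ∂μ

variable {μ L}

lemma integrable_comp_of_abs_le [IsFiniteMeasure μ] (hL : Measurable L) {φ : ℕ → ℝ} {C : ℝ}
    (hφ : ∀ k, |φ k| ≤ C) : Integrable (fun ω => φ (L ω)) μ :=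
  .of_bound (measurable_from_nat.comp hL).aestronglyMeasurable C (ae_of_all _ fun ω => hφ (L ω))

lemma integrable_cycleCost [IsFiniteMeasure μ] (hL : Measurable L) (g h m : ℝ) (r : ℕ) :
    Integrable (fun ω => if L ω ≤ r then g else h + m * r) μ :=
  integrable_comp_of_abs_le hL (φ := fun k => if k ≤ r then g else h + m * r)
    (C := max |g| |h + m * r|) fun k => by
    split_ifs
    exacts [le_max_left _ _, le_max_right _ _]

lemma integrable_cycleLength [IsFiniteMeasure μ] (hL : Measurable L) (r : ℕ) :
    Integrable (fun ω => ((min (L ω) r : ℕ) : ℝ)) μ :=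
  integrable_comp_of_abs_le hL (φ := fun k => ((min k r : ℕ) : ℝ)) (C := r) fun k => by
    rw [abs_of_nonneg (Nat.cast_nonneg _)]
    exact_mod_cast min_le_right k r

lemma measureReal_eq_succ [IsFiniteMeasure μ] (hL : Measurable L) (k : ℕ) :
    μ.real {ω | L ω = k + 1} = μ.real {ω | k < L ω} - μ.real {ω | k + 1 < L ω} := by
  have hsub : {ω | k + 1 < L ω} ⊆ {ω | k < L ω} := fun ω (hω : k + 1 < L ω) =>
    show k < L ω by omega
  have hdiff : {ω | L ω = k + 1} = {ω | k < L ω} \ {ω | k + 1 < L ω} := by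
    ext ω
    simp only [Set.mem_ofPred_eq, Set.mem_sdiff, not_lt]
    omega
  rw [hdiff, measureReal_sdiff hsub (hL measurableSet_Ioi)]

lemma expectedCycleCost_eq [IsProbabilityMeasure μ] (hL : Measurable L) (g h m : ℝ) (r : ℕ) :
    expectedCycleCost μ L g h m r
      = (1 - μ.real {ω | r < L ω}) * g + μ.real {ω | r < L ω} * (h + m * r) := by
  have hs : MeasurableSet {ω | r < L ω} := hL measurableSet_Ioi
  have hsplit : (fun ω => if L ω ≤ r then g else h + m * r)
      = fun ω => g + {ω | r < L ω}.indicator (fun _ => h + m * r - g) ω := by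
    ext ω
    by_cases hω : L ω ≤ r
    · simp [hω]
    · simp [hω, not_le.mp hω]
  rw [expectedCycleCost, hsplit, integral_add (integrable_const _)
    ((integrable_const _).indicator hs), integral_const, integral_indicator_const _ hs]
  simp only [probReal_univ, smul_eq_mul]
  ring

lemma expectedCycleLength_eq [IsFiniteMeasure μ] (hL : Measurable L) (hpos : ∀ ω, 1 ≤ L ω)
    (r : ℕ) :
    expectedCycleLength μ L r
      = ∑ k ∈ Finset.Icc 1 r, μ.real {ω | L ω = k} * k + μ.real {ω | r < L ω} * r := by
  have hsplit : (fun ω => ((min (L ω) r : ℕ) : ℝ))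
      = fun ω => ∑ k ∈ Finset.Icc 1 r, {ω | L ω = k}.indicator (fun _ => (k : ℝ)) ω
          + {ω | r < L ω}.indicator (fun _ => (r : ℝ)) ω := by
    ext ω
    simp only [Set.indicator_apply, Set.mem_ofPred_eq, Finset.sum_ite_eq, Finset.mem_Icc]
    by_cases hω : L ω ≤ r
    · simp [hω, hpos ω]
    · simp [hω, not_le.mp hω, (not_le.mp hω).le]
  have hmeas (k : ℕ) : MeasurableSet {ω | L ω = k} := hL (measurableSet_singleton k)
  have hgt : MeasurableSet {ω | r < L ω} := hL measurableSet_Ioi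
  rw [expectedCycleLength, hsplit,
    integral_add (integrable_finsetSum _ fun k _ => (integrable_const _).indicator (hmeas k))
      ((integrable_const _).indicator hgt),
    integral_finsetSum _ fun k _ => (integrable_const _).indicator (hmeas k),
    integral_indicator_const _ hgt]
  simp only [integral_indicator_const _ (hmeas _), smul_eq_mul]

lemma expectedCycleLength_eq_of_survival [IsFiniteMeasure μ] (hL : Measurable L)
    (hpos : ∀ ω, 1 ≤ L ω) {S : ℝ → ℝ} (hS : ∀ u : ℕ, μ.real {ω | u < L ω} = S u) (r : ℕ) :
    expectedCycleLength μ L r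
      = ∑ k ∈ Finset.Icc 1 r, (S ((k : ℝ) - 1) - S k) * k + S r * r := by
  rw [expectedCycleLength_eq hL hpos, hS]
  congr 1
  refine Finset.sum_congr rfl fun k hk => ?_
  obtain ⟨j, rfl⟩ := Nat.exists_eq_add_of_le' (Finset.mem_Icc.mp hk).1
  rw [measureReal_eq_succ hL, hS, hS]
  push_cast
  ring_nf

lemma one_le_expectedCycleLength [IsProbabilityMeasure μ] (hL : Measurable L)
    (hpos : ∀ ω, 1 ≤ L ω) {r : ℕ} (hr : 1 ≤ r) : 1 ≤ expectedCycleLength μ L r :=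
  calc (1 : ℝ) = ∫ _, (1 : ℝ) ∂μ := by simp
    _ ≤ expectedCycleLength μ L r :=
      integral_mono (integrable_const _) (integrable_cycleLength hL r) fun ω =>
        Nat.one_le_cast.mpr (le_min (hpos ω) hr)

lemma expectedCycleCost_nonneg {g h m : ℝ} (hg : 0 ≤ g) (hh : 0 ≤ h) (hm : 0 ≤ m) (r : ℕ) :
    0 ≤ expectedCycleCost μ L g h m r :=
  integral_nonneg fun ω => by split_ifs <;> positivity

lemma integral_ageReplacementCost_eq [IsProbabilityMeasure μ] (hL : Measurable L)
    (g h m c : ℝ) (T s r : ℕ) :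
    ∫ ω, (if (s : ℝ) + L ω ≤ ((s + r : ℕ) : ℝ) then g + ((T : ℝ) - ((s : ℝ) + L ω)) * c
          else h + (((s + r : ℕ) : ℝ) - s) * m + ((T : ℝ) - ((s + r : ℕ) : ℝ)) * c) ∂μ
      = (T - s) * c + expectedCycleCost μ L g h m r - c * expectedCycleLength μ L r := by
  have hsplit : ∀ ω, (if (s : ℝ) + L ω ≤ ((s + r : ℕ) : ℝ) then g + ((T : ℝ) - ((s : ℝ) + L ω)) * c
        else h + (((s + r : ℕ) : ℝ) - s) * m + ((T : ℝ) - ((s + r : ℕ) : ℝ)) * c)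
      = (T - s) * c + (if L ω ≤ r then g else h + m * r) - c * ((min (L ω) r : ℕ) : ℝ) := by
    intro ω
    by_cases hω : L ω ≤ r
    · have : (s : ℝ) + L ω ≤ ((s + r : ℕ) : ℝ) := by
        rwa [Nat.cast_add, add_le_add_iff_left, Nat.cast_le]
      simp only [if_pos this, if_pos hω, min_eq_left hω]
      ring
    · have : ¬ (s : ℝ) + L ω ≤ ((s + r : ℕ) : ℝ) := by
        rwa [Nat.cast_add, add_le_add_iff_left, Nat.cast_le]
      simp only [if_neg this, if_neg hω, min_eq_right (not_le.mp hω).le]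
      push_cast
      ring
  have hint : Integrable (fun ω => (T - s) * c + (if L ω ≤ r then g else h + m * r)) μ :=
    (integrable_const _).add (integrable_cycleCost hL g h m r)
  simp only [hsplit]
  rw [integral_sub hint ((integrable_cycleLength hL r).const_mul c),
    integral_add (integrable_const _) (integrable_cycleCost hL g h m r), integral_const,
    integral_const_mul, probReal_univ, one_smul, expectedCycleCost, expectedCycleLength]

end CycleMoments

theorem min_objective_age_zero_eq_general
    {Ω : Type*} [MeasureSpace Ω] [IsProbabilityMeasure (ℙ : Measure Ω)]
    (θ β g h m : ℝ) (hg : 0 ≤ g) (hh : 0 ≤ h) (hm : 0 ≤ m)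
    (L : Ω → ℕ) (hmeasL : Measurable L) (hposL : ∀ ω, 1 ≤ L ω)
    (hsurvL : ∀ u : ℕ, ℙ {ω | u < L ω} = ENNReal.ofReal (Real.exp (-θ * (u : ℝ) ^ β)))
    (q : ℕ → ℝ)
    (hq : ∀ t : ℕ, 1 ≤ t →
      q t = ((1 - Real.exp (-θ * (t : ℝ) ^ β)) * g
            + Real.exp (-θ * (t : ℝ) ^ β) * (h + m * t))
          / ((∑ k ∈ Finset.Icc 1 t,
              (Real.exp (-θ * ((k : ℝ) - 1) ^ β) - Real.exp (-θ * (k : ℝ) ^ β)) * (k : ℝ))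
            + Real.exp (-θ * (t : ℝ) ^ β) * (t : ℝ)))
    (c : ℝ) (hc : c = ⨅ t : ℕ, q (t + 1))
    (T s : ℕ)
    (Q : ℕ → ℝ → ℝ)
    (hQ : ∀ t : ℕ, s + 1 ≤ t → t ≤ T → ∀ u : ℝ,
      Q t u = if u ≤ (t : ℝ) then g + ((T : ℝ) - u) * c
              else h + ((t : ℝ) - (s : ℝ)) * m + ((T : ℝ) - (t : ℝ)) * c)
    (f : ℕ → ℝ)
    (hf : ∀ t : ℕ, f t = ∫ ω, Q t ((s : ℝ) + (L ω : ℝ)) ∂ℙ)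
    (t₀ : ℕ) (ht₀ : 1 ≤ t₀) (hqt₀ : q t₀ = c) (ht₀T : t₀ + s ≤ T)
    (hne : (Finset.Icc (s + 1) T).Nonempty) :
    (Finset.Icc (s + 1) T).inf' hne f = ((T : ℝ) - (s : ℝ)) * c := by
  have hS (u : ℕ) : (ℙ : Measure Ω).real {ω | u < L ω} = exp (-θ * (u : ℝ) ^ β) := by
    rw [measureReal_def, hsurvL, ENNReal.toReal_ofReal (exp_pos _).le]
  have hlen {r : ℕ} (hr : 1 ≤ r) : 0 < expectedCycleLength ℙ L r :=
    one_pos.trans_le (one_le_expectedCycleLength hmeasL hposL hr)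
  have hq_eq {r : ℕ} (hr : 1 ≤ r) :
      q r = expectedCycleCost ℙ L g h m r / expectedCycleLength ℙ L r := by
    rw [hq r hr, expectedCycleCost_eq hmeasL, expectedCycleLength_eq_of_survival hmeasL hposL
      (S := fun x => exp (-θ * x ^ β)) hS, hS]
  have hc_le {r : ℕ} (hr : 1 ≤ r) : c ≤ q r := by
    have hbdd : BddBelow (Set.range fun t : ℕ => q (t + 1)) :=
      ⟨0, Set.forall_mem_range.2 fun t => (hq_eq t.succ_pos).symm ▸
        div_nonneg (expectedCycleCost_nonneg hg hh hm _) (hlen t.succ_pos).le⟩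
    simpa [hc, Nat.sub_add_cancel hr] using ciInf_le hbdd (r - 1)
  have hf_eq {r : ℕ} (hr : 1 ≤ r) (hrT : s + r ≤ T) :
      f (s + r) = (T - s) * c + expectedCycleLength ℙ L r * (q r - c) := by
    simp only [hf, hQ (s + r) (by omega) hrT, integral_ageReplacementCost_eq hmeasL,
      hq_eq hr, mul_sub, mul_div_cancel₀ _ (hlen hr).ne']
    ring
  refine le_antisymm ?_ (Finset.le_inf' hne _ fun t ht => ?_)
  · refine Finset.inf'_le_of_le f (b := s + t₀) (Finset.mem_Icc.mpr ⟨by omega, by omega⟩) ?_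
    rw [hf_eq ht₀ (by omega), hqt₀, sub_self, mul_zero, add_zero]
  · obtain ⟨ht1, htT⟩ := Finset.mem_Icc.mp ht
    obtain ⟨r, rfl⟩ := Nat.exists_eq_add_of_le (show s ≤ t by omega)
    rw [hf_eq (by omega) htT]
    have hr : 1 ≤ r := by omega
    exact le_add_of_nonneg_right (mul_nonneg (hlen hr).le (sub_nonneg.2 (hc_le hr)))

/-- If some integer `t₀ ≥ 1` satisfies `q_{t₀} = c` and `t₀ + s ≤ T`, then
the minimum of `f_{(s,0)}` over `{s + 1, …, T}` equals `(T − s) c`. -/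
theorem min_objective_age_zero_eq
    {Ω : Type*} [MeasureSpace Ω] [IsProbabilityMeasure (ℙ : Measure Ω)]
    (θ β g h m : ℝ) (hθ : 0 < θ) (hβ : 1 < β) (hg : 0 ≤ g) (hh : 0 ≤ h) (hm : 0 ≤ m)
    (L : Ω → ℕ) (hmeasL : Measurable L) (hposL : ∀ ω, 1 ≤ L ω)
    (hsurvL : ∀ u : ℕ, ℙ {ω | u < L ω} = ENNReal.ofReal (Real.exp (-θ * (u : ℝ) ^ β)))
    (q : ℕ → ℝ)
    (hq : ∀ t : ℕ, 1 ≤ t →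
      q t = ((1 - Real.exp (-θ * (t : ℝ) ^ β)) * g
            + Real.exp (-θ * (t : ℝ) ^ β) * (h + m * t))
          / ((∑ k ∈ Finset.Icc 1 t,
              (Real.exp (-θ * ((k : ℝ) - 1) ^ β) - Real.exp (-θ * (k : ℝ) ^ β)) * (k : ℝ))
            + Real.exp (-θ * (t : ℝ) ^ β) * (t : ℝ)))
    (c : ℝ) (hc : c = ⨅ t : ℕ, q (t + 1))
    (T s : ℕ) (hT : 1 ≤ T) (hsT : s < T)
    (Q : ℕ → ℝ → ℝ)
    (hQ : ∀ t : ℕ, s + 1 ≤ t → t ≤ T → ∀ u : ℝ,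
      Q t u = if u ≤ (t : ℝ) then g + ((T : ℝ) - u) * c
              else h + ((t : ℝ) - (s : ℝ)) * m + ((T : ℝ) - (t : ℝ)) * c)
    (f : ℕ → ℝ)
    (hf : ∀ t : ℕ, f t = ∫ ω, Q t ((s : ℝ) + (L ω : ℝ)) ∂ℙ)
    (t₀ : ℕ) (ht₀ : 1 ≤ t₀) (hqt₀ : q t₀ = c) (ht₀T : t₀ + s ≤ T)
    (hne : (Finset.Icc (s + 1) T).Nonempty) :
    (Finset.Icc (s + 1) T).inf' hne f = ((T : ℝ) - (s : ℝ)) * c :=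
  min_objective_age_zero_eq_general θ β g h m hg hh hm L hmeasL hposL hsurvL q hq c hc T s Q hQ f hf
    t₀ ht₀ hqt₀ ht₀T hne
end

section
/- Suppose there exists an integer t₀ ≥ 1 with q_{t₀} = c. Let s₁ and s₂ be integers with 0 ≤ s₁ < T, 0 ≤ s₂ < T, t₀ + s₁ ≤ T and t₀ + s₂ ≤ T, and let f*_{(sᵢ,0)} = min over t ∈ {sᵢ + 1, …, T} of f_{(sᵢ,0)}(t) for i = 1, 2. Then f*_{(s₁,0)} − f*_{(s₂,0)} = (s₂ − s₁) c. -/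
/-!
Only the law of `L` matters, through its survival function `n ↦ ℙ(L > n)`. Writing `t = s + d`,
the integrand of `f s t` equals `C_d(L) - c · min(L, d) + (T - s) c`, where `C_d` is the cost of
one renewal cycle stopped at age `d`, and the formula for `q_d` is exactly
`𝔼[C_d(L)] / 𝔼[min(L, d)]`. Since `c ≤ q_d` and `𝔼[min(L, d)] > 0`, every `f s (s + d)` is at
least `(T - s) c`, with equality at `d = t₀`; so the minimum is `(T - s) c` whenever `s + t₀ ≤ T`.
-/

open MeasureTheory ProbabilityTheory Real Finset

section NatValued

variable {Ω : Type*} {L : Ω → ℕ}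

lemma comp_eq_sum_indicator_add_indicator (hpos : ∀ ω, 1 ≤ L ω) {φ : ℕ → ℝ} {d : ℕ} {C : ℝ}
    (hφ : ∀ n, d < n → φ n = C) :
    (fun ω => φ (L ω)) = fun ω => (∑ n ∈ Icc 1 d, {ω | L ω = n}.indicator (fun _ => φ n) ω)
      + {ω | d < L ω}.indicator (fun _ => C) ω := by
  funext ω
  simp only [Set.indicator_apply, Set.mem_ofPred_eq, sum_ite_eq, mem_Icc]
  by_cases hL : L ω ≤ d
  · simp [hpos ω, hL]
  · simp [hL, hφ _ (not_le.1 hL)]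

variable [MeasurableSpace Ω] {μ : Measure Ω}

lemma integrable_comp_of_forall_gt_eq [IsFiniteMeasure μ] (hL : Measurable L)
    (hpos : ∀ ω, 1 ≤ L ω) {φ : ℕ → ℝ} {d : ℕ} {C : ℝ} (hφ : ∀ n, d < n → φ n = C) :
    Integrable (fun ω => φ (L ω)) μ := by
  rw [comp_eq_sum_indicator_add_indicator hpos hφ]
  exact (integrable_finsetSum _ fun n _ =>
    (integrable_const _).indicator (hL (measurableSet_singleton n))).add
    ((integrable_const _).indicator (hL measurableSet_Ioi))

lemma integral_comp_of_forall_gt_eq [IsFiniteMeasure μ] (hL : Measurable L)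
    (hpos : ∀ ω, 1 ≤ L ω) {φ : ℕ → ℝ} {d : ℕ} {C : ℝ} (hφ : ∀ n, d < n → φ n = C) :
    ∫ ω, φ (L ω) ∂μ =
      ∑ n ∈ Icc 1 d, μ.real {ω | L ω = n} * φ n + μ.real {ω | d < L ω} * C := by
  have hfibre (n : ℕ) : MeasurableSet {ω | L ω = n} := hL (measurableSet_singleton n)
  have htail : MeasurableSet {ω | d < L ω} := hL measurableSet_Ioi
  have hint : ∀ n ∈ Icc 1 d, Integrable ({ω | L ω = n}.indicator fun _ => φ n) μ :=
    fun n _ => (integrable_const _).indicator (hfibre n)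
  rw [comp_eq_sum_indicator_add_indicator hpos hφ,
    integral_add (integrable_finsetSum _ hint) ((integrable_const _).indicator htail),
    integral_finsetSum _ hint, integral_indicator_const _ htail, smul_eq_mul]
  congr 1
  exact sum_congr rfl fun n _ => by rw [integral_indicator_const _ (hfibre n), smul_eq_mul]

lemma sum_measureReal_eq_one_sub [IsProbabilityMeasure μ] (hL : Measurable L)
    (hpos : ∀ ω, 1 ≤ L ω) (d : ℕ) :
    ∑ n ∈ Icc 1 d, μ.real {ω | L ω = n} = 1 - μ.real {ω | d < L ω} := by
  have h := integral_comp_of_forall_gt_eq (μ := μ) hL hpos (φ := fun _ => (1 : ℝ)) (d := d)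
    (fun _ _ => rfl)
  simp only [integral_const, probReal_univ, smul_eq_mul, mul_one] at h
  linarith

lemma measureReal_fibre_eq_sub [IsFiniteMeasure μ] (hL : Measurable L) {n : ℕ} (hn : 1 ≤ n) :
    μ.real {ω | L ω = n} = μ.real {ω | n - 1 < L ω} - μ.real {ω | n < L ω} := by
  have hset : {ω | L ω = n} = {ω | n - 1 < L ω} \ {ω | n < L ω} := by
    ext ω
    simp only [Set.mem_ofPred_eq, Set.mem_sdiff, not_lt]
    omega
  have hsub : {ω | n < L ω} ⊆ {ω | n - 1 < L ω} :=
    fun ω (h : n < L ω) => show n - 1 < L ω by omega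
  rw [hset, measureReal_sdiff hsub (hL measurableSet_Ioi)]

end NatValued

/-- The cost of one renewal cycle with lifetime `n` when the unit is stopped at age `t`:
failure (`n ≤ t`) costs `g`, stopping costs `h + m t`. -/
def cycleCost (g h m : ℝ) (t n : ℕ) : ℝ := if n ≤ t then g else h + m * t

lemma cycleCost_nonneg {g h m : ℝ} (hg : 0 ≤ g) (hh : 0 ≤ h) (hm : 0 ≤ m) (t n : ℕ) :
    0 ≤ cycleCost g h m t n := by
  unfold cycleCost
  split_ifs
  exacts [hg, by positivity]

section RenewalReward

variable {Ω : Type*} [MeasurableSpace Ω] {μ : Measure Ω} [IsProbabilityMeasure μ] {L : Ω → ℕ}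

lemma integral_cycleCost (hL : Measurable L) (hpos : ∀ ω, 1 ≤ L ω) (g h m : ℝ) (t : ℕ) :
    ∫ ω, cycleCost g h m t (L ω) ∂μ =
      (1 - μ.real {ω | t < L ω}) * g + μ.real {ω | t < L ω} * (h + m * t) := by
  rw [integral_comp_of_forall_gt_eq hL hpos (φ := cycleCost g h m t) (C := h + m * t)
      fun n hn => if_neg (not_le.2 hn),
    ← sum_measureReal_eq_one_sub (μ := μ) hL hpos, sum_mul]
  congr 1
  exact sum_congr rfl fun n hn => by rw [cycleCost, if_pos (mem_Icc.1 hn).2]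

lemma integral_min (hL : Measurable L) (hpos : ∀ ω, 1 ≤ L ω) (t : ℕ) :
    ∫ ω, min (L ω : ℝ) t ∂μ =
      ∑ k ∈ Icc 1 t, (μ.real {ω | k - 1 < L ω} - μ.real {ω | k < L ω}) * k
        + μ.real {ω | t < L ω} * t := by
  rw [integral_comp_of_forall_gt_eq hL hpos (C := (t : ℝ)) fun n hn =>
    min_eq_right (Nat.cast_le.2 hn.le)]
  congr 1
  exact sum_congr rfl fun k hk => by
    rw [measureReal_fibre_eq_sub hL (mem_Icc.1 hk).1, min_eq_left (Nat.cast_le.2 (mem_Icc.1 hk).2)]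

lemma integral_min_pos (hL : Measurable L) (hpos : ∀ ω, 1 ≤ L ω) {t : ℕ} (ht : 1 ≤ t) :
    0 < ∫ ω, min (L ω : ℝ) t ∂μ := by
  have hle : ∫ _ : Ω, (1 : ℝ) ∂μ ≤ ∫ ω, min (L ω : ℝ) t ∂μ :=
    integral_mono (integrable_const _)
      (integrable_comp_of_forall_gt_eq hL hpos fun n hn => min_eq_right (Nat.cast_le.2 hn.le))
      fun ω => le_min (Nat.one_le_cast.2 (hpos ω)) (Nat.one_le_cast.2 ht)
  simp only [integral_const, probReal_univ, smul_eq_mul, mul_one] at hle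
  linarith

lemma integral_objective (hL : Measurable L) (hpos : ∀ ω, 1 ≤ L ω) (g h m c : ℝ)
    (T s d : ℕ) :
    ∫ ω, (if (s : ℝ) + (L ω : ℝ) ≤ ((s + d : ℕ) : ℝ) then
            g + ((T : ℝ) - ((s : ℝ) + (L ω : ℝ))) * c
          else h + (((s + d : ℕ) : ℝ) - (s : ℝ)) * m + ((T : ℝ) - ((s + d : ℕ) : ℝ)) * c) ∂μ
      = (∫ ω, cycleCost g h m d (L ω) ∂μ) - c * (∫ ω, min (L ω : ℝ) d ∂μ)
          + ((T : ℝ) - s) * c := by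
  have hpoint : ∀ n : ℕ,
      (if (s : ℝ) + (n : ℝ) ≤ ((s + d : ℕ) : ℝ) then g + ((T : ℝ) - ((s : ℝ) + (n : ℝ))) * c
        else h + (((s + d : ℕ) : ℝ) - (s : ℝ)) * m + ((T : ℝ) - ((s + d : ℕ) : ℝ)) * c)
      = cycleCost g h m d n - c * min (n : ℝ) d + ((T : ℝ) - s) * c := by
    intro n
    by_cases hn : n ≤ d
    · rw [if_pos (by exact_mod_cast (show s + n ≤ s + d by omega)), cycleCost, if_pos hn,
        min_eq_left (Nat.cast_le.2 hn)]
      ring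
    · rw [if_neg (by exact_mod_cast (show ¬s + n ≤ s + d by omega)), cycleCost, if_neg hn,
        min_eq_right (Nat.cast_le.2 (not_le.1 hn).le)]
      push_cast
      ring
  have hcost : Integrable (fun ω => cycleCost g h m d (L ω)) μ :=
    integrable_comp_of_forall_gt_eq hL hpos fun n hn => if_neg (not_le.2 hn)
  have hlen : Integrable (fun ω => c * min (L ω : ℝ) d) μ :=
    (integrable_comp_of_forall_gt_eq hL hpos fun n hn =>
      min_eq_right (Nat.cast_le.2 hn.le)).const_mul c
  simp only [hpoint]
  rw [integral_add _ (integrable_const _), integral_sub hcost hlen, integral_const_mul,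
    integral_const, probReal_univ, one_smul]
  exact hcost.sub hlen

lemma inf'_objective_eq (hL : Measurable L) (hpos : ∀ ω, 1 ≤ L ω) {g h m c : ℝ}
    {T s t₀ : ℕ} {f : ℕ → ℝ}
    (hf : ∀ t : ℕ, s + 1 ≤ t → t ≤ T →
      f t = ∫ ω, (if (s : ℝ) + (L ω : ℝ) ≤ (t : ℝ) then
                  g + ((T : ℝ) - ((s : ℝ) + (L ω : ℝ))) * c
                else h + ((t : ℝ) - (s : ℝ)) * m + ((T : ℝ) - (t : ℝ)) * c) ∂μ)
    (hc : ∀ t : ℕ, 1 ≤ t →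
      c ≤ (∫ ω, cycleCost g h m t (L ω) ∂μ) / ∫ ω, min (L ω : ℝ) t ∂μ)
    (ht₀ : 1 ≤ t₀)
    (hc₀ : (∫ ω, cycleCost g h m t₀ (L ω) ∂μ) / (∫ ω, min (L ω : ℝ) t₀ ∂μ) = c)
    (hs : t₀ + s ≤ T) (hne : (Icc (s + 1) T).Nonempty) :
    (Icc (s + 1) T).inf' hne f = ((T : ℝ) - s) * c := by
  have hf' : ∀ d, 1 ≤ d → s + d ≤ T → f (s + d) =
      (∫ ω, cycleCost g h m d (L ω) ∂μ) - c * (∫ ω, min (L ω : ℝ) d ∂μ) + ((T : ℝ) - s) * c :=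
    fun d hd hsd => by rw [hf _ (by omega) hsd, integral_objective hL hpos]
  apply le_antisymm
  · calc (Icc (s + 1) T).inf' hne f ≤ f (s + t₀) := inf'_le _ (mem_Icc.2 ⟨by omega, by omega⟩)
      _ = ((T : ℝ) - s) * c := by
        rw [hf' t₀ ht₀ (by omega), ← hc₀, div_mul_cancel₀ _ (integral_min_pos hL hpos ht₀).ne']
        ring
  · refine le_inf' _ _ fun t ht => ?_
    obtain ⟨d, hd, rfl⟩ : ∃ d, 1 ≤ d ∧ t = s + d := ⟨t - s, by grind, by grind⟩
    have hcd := (le_div_iff₀ (integral_min_pos hL hpos hd)).1 (hc d hd)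
    rw [hf' d hd (mem_Icc.1 ht).2]
    linarith

end RenewalReward

theorem min_objective_difference_eq_general
    {Ω : Type*} [MeasureSpace Ω] [IsProbabilityMeasure (ℙ : Measure Ω)]
    (θ β g h m : ℝ) (hg : 0 ≤ g) (hh : 0 ≤ h) (hm : 0 ≤ m)
    (L : Ω → ℕ) (hmeasL : Measurable L) (hposL : ∀ ω, 1 ≤ L ω)
    (hsurvL : ∀ u : ℕ, ℙ {ω | u < L ω} = ENNReal.ofReal (Real.exp (-θ * (u : ℝ) ^ β)))
    (q : ℕ → ℝ)
    (hq : ∀ t : ℕ, 1 ≤ t →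
      q t = ((1 - Real.exp (-θ * (t : ℝ) ^ β)) * g
            + Real.exp (-θ * (t : ℝ) ^ β) * (h + m * t))
          / ((∑ k ∈ Finset.Icc 1 t,
              (Real.exp (-θ * ((k : ℝ) - 1) ^ β) - Real.exp (-θ * (k : ℝ) ^ β)) * (k : ℝ))
            + Real.exp (-θ * (t : ℝ) ^ β) * (t : ℝ)))
    (c : ℝ) (hc : c = ⨅ t : ℕ, q (t + 1))
    (T : ℕ)
    (f : ℕ → ℕ → ℝ)
    (hf : ∀ s' : ℕ, s' < T → ∀ t : ℕ, s' + 1 ≤ t → t ≤ T →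
      f s' t = ∫ ω, (if (s' : ℝ) + (L ω : ℝ) ≤ (t : ℝ) then
                  g + ((T : ℝ) - ((s' : ℝ) + (L ω : ℝ))) * c
                else h + ((t : ℝ) - (s' : ℝ)) * m + ((T : ℝ) - (t : ℝ)) * c) ∂ℙ)
    (t₀ : ℕ) (ht₀ : 1 ≤ t₀) (hqt₀ : q t₀ = c)
    (s₁ s₂ : ℕ)
    (ht₀s₁ : t₀ + s₁ ≤ T) (ht₀s₂ : t₀ + s₂ ≤ T)
    (hne₁ : (Finset.Icc (s₁ + 1) T).Nonempty) (hne₂ : (Finset.Icc (s₂ + 1) T).Nonempty) :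
    (Finset.Icc (s₁ + 1) T).inf' hne₁ (f s₁) - (Finset.Icc (s₂ + 1) T).inf' hne₂ (f s₂)
      = ((s₂ : ℝ) - (s₁ : ℝ)) * c := by
  have hS : ∀ n : ℕ, (ℙ : Measure Ω).real {ω | n < L ω} = exp (-θ * (n : ℝ) ^ β) := fun n => by
    rw [measureReal_def, hsurvL, ENNReal.toReal_ofReal (exp_pos _).le]
  have hq_rate : ∀ t, 1 ≤ t →
      q t = (∫ ω, cycleCost g h m t (L ω)) / ∫ ω, min (L ω : ℝ) t := fun t ht => by
    rw [hq t ht, integral_cycleCost hmeasL hposL, integral_min hmeasL hposL, hS]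
    congr 2
    exact sum_congr rfl fun k hk => by
      rw [hS, hS, Nat.cast_sub (mem_Icc.1 hk).1, Nat.cast_one]
  have hc_le : ∀ t, 1 ≤ t → c ≤ q t := fun t ht => by
    have hbdd : BddBelow (Set.range fun k : ℕ => q (k + 1)) :=
      ⟨0, Set.forall_mem_range.2 fun k => by
        rw [hq_rate _ le_add_self]
        exact div_nonneg (integral_nonneg fun ω => cycleCost_nonneg hg hh hm _ _)
          (integral_min_pos hmeasL hposL le_add_self).le⟩
    obtain ⟨k, rfl⟩ : ∃ k, t = k + 1 := ⟨t - 1, by omega⟩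
    exact hc ▸ ciInf_le hbdd k
  have hmin : ∀ s, t₀ + s ≤ T → ∀ hne : (Icc (s + 1) T).Nonempty,
      (Icc (s + 1) T).inf' hne (f s) = ((T : ℝ) - s) * c := fun s hs hne =>
    inf'_objective_eq hmeasL hposL (hf s (by omega)) (fun t ht => hq_rate t ht ▸ hc_le t ht)
      ht₀ (hq_rate t₀ ht₀ ▸ hqt₀) hs hne
  rw [hmin s₁ ht₀s₁ hne₁, hmin s₂ ht₀s₂ hne₂]
  ring

/-- Suppose some integer `t₀ ≥ 1` satisfies `q_{t₀} = c`. If `s₁, s₂` satisfy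
`0 ≤ sᵢ < T` and `t₀ + sᵢ ≤ T`, then `f*_{(s₁,0)} − f*_{(s₂,0)} = (s₂ − s₁) c`, where
`f*_{(sᵢ,0)} = min_{t ∈ {sᵢ+1,…,T}} f_{(sᵢ,0)}(t)`. -/
theorem min_objective_difference_eq
    {Ω : Type*} [MeasureSpace Ω] [IsProbabilityMeasure (ℙ : Measure Ω)]
    (θ β g h m : ℝ) (hθ : 0 < θ) (hβ : 1 < β) (hg : 0 ≤ g) (hh : 0 ≤ h) (hm : 0 ≤ m)
    (L : Ω → ℕ) (hmeasL : Measurable L) (hposL : ∀ ω, 1 ≤ L ω)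
    (hsurvL : ∀ u : ℕ, ℙ {ω | u < L ω} = ENNReal.ofReal (Real.exp (-θ * (u : ℝ) ^ β)))
    (q : ℕ → ℝ)
    (hq : ∀ t : ℕ, 1 ≤ t →
      q t = ((1 - Real.exp (-θ * (t : ℝ) ^ β)) * g
            + Real.exp (-θ * (t : ℝ) ^ β) * (h + m * t))
          / ((∑ k ∈ Finset.Icc 1 t,
              (Real.exp (-θ * ((k : ℝ) - 1) ^ β) - Real.exp (-θ * (k : ℝ) ^ β)) * (k : ℝ))
            + Real.exp (-θ * (t : ℝ) ^ β) * (t : ℝ)))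
    (c : ℝ) (hc : c = ⨅ t : ℕ, q (t + 1))
    (T : ℕ) (hT : 1 ≤ T)
    (f : ℕ → ℕ → ℝ)
    (hf : ∀ s' : ℕ, s' < T → ∀ t : ℕ, s' + 1 ≤ t → t ≤ T →
      f s' t = ∫ ω, (if (s' : ℝ) + (L ω : ℝ) ≤ (t : ℝ) then
                  g + ((T : ℝ) - ((s' : ℝ) + (L ω : ℝ))) * c
                else h + ((t : ℝ) - (s' : ℝ)) * m + ((T : ℝ) - (t : ℝ)) * c) ∂ℙ)
    (t₀ : ℕ) (ht₀ : 1 ≤ t₀) (hqt₀ : q t₀ = c)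
    (s₁ s₂ : ℕ) (hs₁ : s₁ < T) (hs₂ : s₂ < T)
    (ht₀s₁ : t₀ + s₁ ≤ T) (ht₀s₂ : t₀ + s₂ ≤ T)
    (hne₁ : (Finset.Icc (s₁ + 1) T).Nonempty) (hne₂ : (Finset.Icc (s₂ + 1) T).Nonempty) :
    (Finset.Icc (s₁ + 1) T).inf' hne₁ (f s₁) - (Finset.Icc (s₂ + 1) T).inf' hne₂ (f s₂)
      = ((s₂ : ℝ) - (s₁ : ℝ)) * c :=
  min_objective_difference_eq_general θ β g h m hg hh hm L hmeasL hposL hsurvL q hq c hc T f hf t₀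
    ht₀ hqt₀ s₁ s₂ ht₀s₁ ht₀s₂ hne₁ hne₂
end

section
/- Let a ≥ 0 be an integer and suppose f_{(0,a)} attains its minimum over {1, …, T} at some point τ_a with τ_a ≤ T − s. Then f*_{(s,a)} = f*_{(0,a)} − s·c, where f*_{(s,a)} = min over t ∈ {s + 1, …, T} of f_{(s,a)}(t) and f*_{(0,a)} = min over t ∈ {1, …, T} of f_{(0,a)}(t). -/
open MeasureTheory ProbabilityTheory Real

/-!
Write `u = s' + L` for the failure epoch. Starting the cycle `s` periods later and stopping it
`s` periods later leaves the failure event `{L ≤ t - s'}` and the age-dependent cost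
`h + (t - s' + a) m` unchanged; the only change is that the remaining horizon, `T - u` or
`T - t`, shrinks by `s`, which lowers the cost by `s c` for every value of `L`. Hence
`f_{(s,a)}(u + s) = f_{(0,a)}(u) - s c` for `1 ≤ u ≤ T - s`, and the minimum of `f_{(0,a)}` over
`{1, …, T - s}` equals its minimum over `{1, …, T}` because the minimiser `τ_a` lies in it.
-/

/-- `Q_{(s',a)}(t, s' + n)`: the cost when the residual life `L_a` takes the value `n`. -/
noncomputable def replacementCost (g h m c : ℝ) (T a s' t n : ℕ) : ℝ :=
  if (s' : ℝ) + (n : ℝ) ≤ (t : ℝ) then g + ((T : ℝ) - ((s' : ℝ) + (n : ℝ))) * c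
  else h + ((t : ℝ) - (s' : ℝ) + (a : ℝ)) * m + ((T : ℝ) - (t : ℝ)) * c

theorem replacementCost_shift (g h m c : ℝ) (T a s u n : ℕ) :
    replacementCost g h m c T a s (u + s) n = replacementCost g h m c T a 0 u n - s * c := by
  unfold replacementCost
  push_cast
  by_cases hn : (n : ℝ) ≤ u
  · rw [if_pos (by linarith), if_pos (by linarith)]
    ring
  · rw [if_neg (by linarith), if_neg (by linarith)]
    ring

theorem finite_range_replacementCost (g h m c : ℝ) (T a s t : ℕ) :
    (Set.range (replacementCost g h m c T a s t)).Finite := by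
  let failureCost : ℕ → ℝ := fun n ↦ g + ((T : ℝ) - ((s : ℝ) + (n : ℝ))) * c
  let survivalCost : ℝ := h + ((t : ℝ) - (s : ℝ) + (a : ℝ)) * m + ((T : ℝ) - (t : ℝ)) * c
  refine (((Set.finite_Iic t).image failureCost).insert survivalCost).subset ?_
  rintro _ ⟨n, rfl⟩
  unfold replacementCost
  split_ifs with hn
  · refine Or.inr ⟨n, ?_, rfl⟩
    have : (n : ℝ) ≤ t := by linarith [(Nat.cast_nonneg s : (0 : ℝ) ≤ s)]
    exact_mod_cast this
  · exact Or.inl rfl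

theorem integrable_comp_of_finite_range {Ω α E : Type*} [MeasurableSpace Ω] [MeasurableSpace α]
    [Countable α] [MeasurableSingletonClass α] [NormedAddCommGroup E] {μ : Measure Ω}
    [IsFiniteMeasure μ] {L : Ω → α} (hL : Measurable L) {φ : α → E}
    (hφ : (Set.range φ).Finite) : Integrable (fun ω ↦ φ (L ω)) μ := by
  obtain ⟨C, hC⟩ := isBounded_iff_forall_norm_le.mp hφ.isBounded
  exact .of_bound (StronglyMeasurable.of_discrete.comp_measurable hL).aestronglyMeasurable C
    (.of_forall fun ω ↦ hC _ ⟨L ω, rfl⟩)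

theorem integral_replacementCost_shift {Ω : Type*} [MeasurableSpace Ω] {μ : Measure Ω}
    [IsProbabilityMeasure μ] {L : Ω → ℕ} (hL : Measurable L) (g h m c : ℝ) (T a s u : ℕ) :
    ∫ ω, replacementCost g h m c T a s (u + s) (L ω) ∂μ
      = ∫ ω, replacementCost g h m c T a 0 u (L ω) ∂μ - s * c := by
  simp only [replacementCost_shift]
  rw [integral_sub (integrable_comp_of_finite_range hL (finite_range_replacementCost ..))
    (integrable_const _), integral_const, probReal_univ, one_smul]

theorem Finset.inf'_Icc_eq_inf'_Icc_add {α : Type*} [LinearOrder α] {s T : ℕ}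
    (hne : (Icc (s + 1) T).Nonempty) (F : ℕ → α) :
    (Icc (s + 1) T).inf' hne F
      = (Icc 1 (T - s)).inf' (nonempty_Icc.mpr (by grind [nonempty_Icc])) fun u ↦ F (u + s) := by
  have hsT : s ≤ T := by grind [nonempty_Icc]
  have himage : Icc (s + 1) T = (Icc 1 (T - s)).image (· + s) := by
    rw [image_add_right_Icc, Nat.sub_add_cancel hsT, add_comm]
  rw [inf'_congr hne himage fun _ _ ↦ rfl, inf'_image]
  rfl

theorem Finset.inf'_sub_const {ι G : Type*} [AddCommGroup G] [LinearOrder G]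
    [IsOrderedAddMonoid G] (s : Finset ι) (hs : s.Nonempty) (f : ι → G) (a : G) :
    s.inf' hs (fun i ↦ f i - a) = s.inf' hs f - a :=
  (map_finset_inf' (OrderIso.subRight a) hs f).symm

theorem shifted_min_objective_eq_general
    {Ω : Type*} [MeasureSpace Ω] [IsProbabilityMeasure (ℙ : Measure Ω)]
    (g h m : ℝ)
    (c : ℝ)
    (T s : ℕ) (hsT : s < T)
    (a : ℕ)
    (La : Ω → ℕ) (hmeasLa : Measurable La)
    (f : ℕ → ℕ → ℝ)
    (hf : ∀ s' : ℕ, s' < T → ∀ t : ℕ, s' + 1 ≤ t → t ≤ T →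
      f s' t = ∫ ω, (if (s' : ℝ) + (La ω : ℝ) ≤ (t : ℝ) then
                  g + ((T : ℝ) - ((s' : ℝ) + (La ω : ℝ))) * c
                else h + ((t : ℝ) - (s' : ℝ) + (a : ℝ)) * m
                      + ((T : ℝ) - (t : ℝ)) * c) ∂ℙ)
    (τa : ℕ) (hτa1 : 1 ≤ τa)
    (hτmin : ∀ t : ℕ, 1 ≤ t → t ≤ T → f 0 τa ≤ f 0 t)
    (hτa3 : τa + s ≤ T)
    (hne : (Finset.Icc (s + 1) T).Nonempty) (hne0 : (Finset.Icc 1 T).Nonempty) :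
    (Finset.Icc (s + 1) T).inf' hne (f s)
      = (Finset.Icc 1 T).inf' hne0 (f 0) - (s : ℝ) * c := by
  have hshift : ∀ u ∈ Finset.Icc 1 (T - s), f s (u + s) = f 0 u - s * c := fun u hu ↦ by
    rw [Finset.mem_Icc] at hu
    rw [hf s hsT (u + s) (by omega) (by omega), hf 0 (by omega) u (by omega) (by omega)]
    exact integral_replacementCost_shift hmeasLa g h m c T a s u
  have hinf_eq_min : ∀ N, τa ≤ N → N ≤ T → ∀ hN : (Finset.Icc 1 N).Nonempty,
      (Finset.Icc 1 N).inf' hN (f 0) = f 0 τa := fun N hτN hNT hN ↦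
    le_antisymm (Finset.inf'_le _ (Finset.mem_Icc.mpr ⟨hτa1, hτN⟩))
      (Finset.le_inf' _ _ fun t ht ↦
        hτmin t (Finset.mem_Icc.mp ht).1 ((Finset.mem_Icc.mp ht).2.trans hNT))
  rw [Finset.inf'_Icc_eq_inf'_Icc_add, Finset.inf'_congr _ rfl hshift, Finset.inf'_sub_const,
    hinf_eq_min _ (by omega) (by omega), hinf_eq_min _ (by omega) le_rfl]

/-- Let `a ≥ 0` and suppose `f_{(0,a)}` attains its minimum over
`{1, …, T}` at some `τ_a` with `τ_a ≤ T − s`. Then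
`f*_{(s,a)} = f*_{(0,a)} − s·c`, where `f*_{(s',a)} = min_{t ∈ {s'+1,…,T}} f_{(s',a)}(t)`. -/
theorem shifted_min_objective_eq
    {Ω : Type*} [MeasureSpace Ω] [IsProbabilityMeasure (ℙ : Measure Ω)]
    (θ β g h m : ℝ) (hθ : 0 < θ) (hβ : 1 < β) (hg : 0 ≤ g) (hh : 0 ≤ h) (hm : 0 ≤ m)
    (q : ℕ → ℝ)
    (hq : ∀ t : ℕ, 1 ≤ t →
      q t = ((1 - Real.exp (-θ * (t : ℝ) ^ β)) * g
            + Real.exp (-θ * (t : ℝ) ^ β) * (h + m * t))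
          / ((∑ k ∈ Finset.Icc 1 t,
              (Real.exp (-θ * ((k : ℝ) - 1) ^ β) - Real.exp (-θ * (k : ℝ) ^ β)) * (k : ℝ))
            + Real.exp (-θ * (t : ℝ) ^ β) * (t : ℝ)))
    (c : ℝ) (hc : c = ⨅ t : ℕ, q (t + 1))
    (T s : ℕ) (hT : 1 ≤ T) (hsT : s < T)
    (a : ℕ)
    (La : Ω → ℕ) (hmeasLa : Measurable La) (hposLa : ∀ ω, 1 ≤ La ω)
    (hsurvLa : ∀ u : ℕ, ℙ {ω | u < La ω}
      = ENNReal.ofReal (Real.exp (θ * ((a : ℝ) ^ β - ((a : ℝ) + u) ^ β))))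
    (f : ℕ → ℕ → ℝ)
    (hf : ∀ s' : ℕ, s' < T → ∀ t : ℕ, s' + 1 ≤ t → t ≤ T →
      f s' t = ∫ ω, (if (s' : ℝ) + (La ω : ℝ) ≤ (t : ℝ) then
                  g + ((T : ℝ) - ((s' : ℝ) + (La ω : ℝ))) * c
                else h + ((t : ℝ) - (s' : ℝ) + (a : ℝ)) * m
                      + ((T : ℝ) - (t : ℝ)) * c) ∂ℙ)
    (τa : ℕ) (hτa1 : 1 ≤ τa) (hτa2 : τa ≤ T)
    (hτmin : ∀ t : ℕ, 1 ≤ t → t ≤ T → f 0 τa ≤ f 0 t)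
    (hτa3 : τa + s ≤ T)
    (hne : (Finset.Icc (s + 1) T).Nonempty) (hne0 : (Finset.Icc 1 T).Nonempty) :
    (Finset.Icc (s + 1) T).inf' hne (f s)
      = (Finset.Icc 1 T).inf' hne0 (f 0) - (s : ℝ) * c :=
  shifted_min_objective_eq_general g h m c T s hsT a La hmeasLa f hf τa hτa1 hτmin hτa3 hne hne0
end
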